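/- arXiv:2412.08104 — 6 statements merged into one kernel-verified Lean document; each statement's English description precedes it below -/
import Mathlib

section
/- (ISS Lyapunov theorem with respect to two outputs, asymptotic case; Theorem 2 of the paper.) Let Ξ ⊆ ℝ^{n_ξ} be closed, let Ω_c assign to each ξ ∈ Ξ a set Ω_c(ξ) ⊆ ℝ^{n_ω} with 0 ∈ Ω_c(ξ), and let F_c : Ξ × ℝ^{n_ω} → ℝ^{n_ξ} satisfy F_c(ξ,ω) ∈ Ξ whenever ξ ∈ Ξ and ω ∈ Ω_c(ξ). Let G1 : Ξ → ℝ^{n_1}, G2 : Ξ → ℝ^{n_2}, and let X ⊆ Ξ be closed and robustly positive invariant, i.e., ξ ∈ X and ω ∈ Ω_c(ξ) imply F_c(ξ,ω) ∈ X. Suppose there exist V : Ξ → [0,∞), functions α1, α2, α3 of class 𝒦∞, and σ of class 𝒦 such that for all ξ ∈ X and ω ∈ Ω_c(ξ): α1(‖G1(ξ)‖) ≤ V(ξ) ≤ α2(‖G2(ξ)‖) and V(F_c(ξ,ω)) ≤ V(ξ) − α3(V(ξ)) + σ(‖ω‖). Then there exist β of class 𝒦𝓛 and γ of class 𝒦 such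 that every trajectory with ξ(k+1) = F_c(ξ(k), ω(k)), ω(k) ∈ Ω_c(ξ(k)) for all k, and ξ(0) ∈ X satisfies ‖G1(ξ(k))‖ ≤ β(‖G2(ξ(0))‖, k) + γ(max_{0≤i≤k} ‖ω(i)‖) for all k ∈ ℕ. -/
open scoped BigOperators

noncomputable section

abbrev Vec (n : ℕ) : Type := EuclideanSpace ℝ (Fin n)

/-- Class 𝒦 functions `[0,∞) → [0,∞)`. -/
def IsClassK (φ : ℝ → ℝ) : Prop :=
  ContinuousOn φ (Set.Ici 0) ∧ StrictMonoOn φ (Set.Ici 0) ∧ φ 0 = 0 ∧ ∀ t, 0 ≤ t → 0 ≤ φ t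

/-- Class 𝒦∞ functions. -/
def IsClassKInf (φ : ℝ → ℝ) : Prop :=
  IsClassK φ ∧ Filter.Tendsto φ Filter.atTop Filter.atTop

/-- Class 𝒦𝓛 functions. -/
def IsClassKL (β : ℝ → ℕ → ℝ) : Prop :=
  (∀ k, IsClassK fun r => β r k) ∧ (∀ r, 0 ≤ r → Antitone fun k => β r k) ∧
    ∀ r, 0 ≤ r → Filter.Tendsto (fun k => β r k) Filter.atTop (nhds 0)

/-!
Along a trajectory, `V` loses at least `α3 V / 2` in a step whose input is small,
`σ ‖ω‖ ≤ α3 V / 2`; after a step with a large input it is at most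
`B ‖ω‖ := α3⁻¹ (2 σ ‖ω‖) + σ ‖ω‖`. The map `v ↦ v - α3 v / 2` need not be monotone, so it is
replaced by its least monotone majorant `T`, which is still continuous with `T v < v` for
`v > 0`; then `T^[k] v → 0`, and by comparison
`V (ξ k) ≤ max (T^[k] (α2 ‖G2 (ξ 0)‖)) (B (max_{i ≤ k} ‖ω i‖))`.
Applying `α1⁻¹` and bounding the maximum by the sum gives `γ = α1⁻¹ ∘ B` and
`β r k = α1⁻¹ (T^[k] (α2 r)) + r 2⁻ᵏ`, where the geometric term makes `β` strictly increasing
in `r`.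
-/

open Set Filter Topology

namespace IsClassK

variable {φ ψ : ℝ → ℝ}

theorem continuousOn (h : IsClassK φ) : ContinuousOn φ (Ici 0) := h.1

theorem strictMonoOn (h : IsClassK φ) : StrictMonoOn φ (Ici 0) := h.2.1

theorem map_zero (h : IsClassK φ) : φ 0 = 0 := h.2.2.1

theorem nonneg (h : IsClassK φ) {t : ℝ} (ht : 0 ≤ t) : 0 ≤ φ t := h.2.2.2 t ht

theorem monotoneOn (h : IsClassK φ) : MonotoneOn φ (Ici 0) := h.strictMonoOn.monotoneOn

theorem mapsTo (h : IsClassK φ) : MapsTo φ (Ici 0) (Ici 0) := fun _ ht => h.nonneg ht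

theorem pos (h : IsClassK φ) {t : ℝ} (ht : 0 < t) : 0 < φ t := by
  simpa [h.map_zero] using h.strictMonoOn self_mem_Ici ht.le ht

theorem comp (hφ : IsClassK φ) (hψ : IsClassK ψ) : IsClassK (φ ∘ ψ) :=
  ⟨hφ.continuousOn.comp hψ.continuousOn hψ.mapsTo, hφ.strictMonoOn.comp hψ.strictMonoOn hψ.mapsTo,
    by simp [hψ.map_zero, hφ.map_zero], fun _ ht => hφ.nonneg (hψ.nonneg ht)⟩

theorem add (hφ : IsClassK φ) (hψ : IsClassK ψ) : IsClassK fun t => φ t + ψ t :=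
  ⟨hφ.continuousOn.add hψ.continuousOn, hφ.strictMonoOn.add hψ.strictMonoOn,
    by simp [hφ.map_zero, hψ.map_zero], fun _ ht => add_nonneg (hφ.nonneg ht) (hψ.nonneg ht)⟩

theorem const_mul {c : ℝ} (hc : 0 < c) (h : IsClassK φ) : IsClassK fun t => c * φ t :=
  ⟨h.continuousOn.const_smul c, fun _ hx _ hy hxy => mul_lt_mul_of_pos_left (h.strictMonoOn hx hy hxy) hc,
    by simp [h.map_zero], fun _ ht => mul_nonneg hc.le (h.nonneg ht)⟩

theorem map_max_le_add (h : IsClassK φ) {x y : ℝ} (hx : 0 ≤ x) (hy : 0 ≤ y) :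
    φ (max x y) ≤ φ x + φ y := by
  rw [h.monotoneOn.map_max hx hy]
  exact max_le_add_of_nonneg (h.nonneg hx) (h.nonneg hy)

end IsClassK

namespace IsClassKInf

variable {φ : ℝ → ℝ}

theorem isClassK (h : IsClassKInf φ) : IsClassK φ := h.1

/-- Extend `φ` by the identity on `(-∞, 0]`; the result is a continuous strictly monotone
surjection of `ℝ`, hence an order isomorphism. -/
theorem exists_orderIso_eqOn (h : IsClassKInf φ) : ∃ e : ℝ ≃o ℝ, EqOn e φ (Ici 0) := by
  obtain ⟨⟨hc, hm, h0, hnn⟩, htop⟩ := h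
  set φ' : ℝ → ℝ := fun x => min x 0 + φ (max x 0)
  have hneg : ∀ x ≤ 0, φ' x = x := fun x hx => by simp [φ', hx, h0]
  have hpos : EqOn φ' φ (Ici 0) := fun x (hx : 0 ≤ x) => by simp [φ', hx]
  have hcont : Continuous φ' :=
    (continuous_id.min continuous_const).add <|
      hc.comp_continuous (continuous_id.max continuous_const) fun x => le_max_right x 0
  have hmono : StrictMono φ' := by
    intro x y hxy
    rcases le_or_gt 0 x with hx | hx
    · rw [hpos hx, hpos (hx.trans hxy.le)]
      exact hm hx (hx.trans hxy.le) hxy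
    rcases le_or_gt 0 y with hy | hy
    · rw [hneg x hx.le, hpos hy]
      exact hx.trans_le (hnn y hy)
    · rwa [hneg x hx.le, hneg y hy.le]
  have hsurj : Function.Surjective φ' := by
    refine hcont.surjective ?_ ?_
    · exact htop.congr' (eventually_ge_atTop 0 |>.mono fun x hx => (hpos hx).symm)
    · exact tendsto_id.congr' (eventually_le_atBot 0 |>.mono fun x hx => (hneg x hx).symm)
  exact ⟨hmono.orderIsoOfSurjective φ' hsurj, hpos⟩

theorem exists_leftInverse (h : IsClassKInf φ) :
    ∃ ψ : ℝ → ℝ, IsClassK ψ ∧ ∀ x, 0 ≤ x → ψ (φ x) = x := by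
  obtain ⟨e, he⟩ := h.exists_orderIso_eqOn
  have he0 : e.symm 0 = 0 := by
    rw [e.symm_apply_eq, he self_mem_Ici, h.isClassK.map_zero]
  refine ⟨e.symm, ⟨e.symm.continuous.continuousOn, e.symm.strictMono.strictMonoOn _, he0,
    fun t ht => he0 ▸ e.symm.monotone ht⟩, fun x hx => ?_⟩
  rw [← he hx, e.symm_apply_apply]

end IsClassKInf

theorem isClassKL_add_geometric {β : ℝ → ℕ → ℝ}
    (hcont : ∀ k, ContinuousOn (β · k) (Ici 0)) (hmono : ∀ k, MonotoneOn (β · k) (Ici 0))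
    (hzero : ∀ k, β 0 k = 0) (hanti : ∀ r, 0 ≤ r → Antitone (β r ·))
    (htend : ∀ r, 0 ≤ r → Tendsto (β r ·) atTop (𝓝 0)) :
    IsClassKL fun r k => β r k + r * 2⁻¹ ^ k := by
  have hgeom : ∀ k : ℕ, (0 : ℝ) < 2⁻¹ ^ k := fun k => by positivity
  refine ⟨fun k => ⟨?_, ?_, by simp [hzero], fun r hr => ?_⟩, fun r hr => ?_, fun r hr => ?_⟩
  · exact (hcont k).add (continuous_id.mul continuous_const).continuousOn
  · exact fun x hx y hy hxy =>
      add_lt_add_of_le_of_lt (hmono k hx hy hxy.le) (mul_lt_mul_of_pos_right hxy (hgeom k))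
  · exact add_nonneg ((hanti r hr).le_of_tendsto (htend r hr) k) (mul_nonneg hr (hgeom k).le)
  · refine (hanti r hr).add fun k l hkl => mul_le_mul_of_nonneg_left ?_ hr
    exact pow_le_pow_of_le_one (by norm_num) (by norm_num) hkl
  · have hpow : Tendsto (fun k => (2⁻¹ : ℝ) ^ k) atTop (𝓝 0) :=
      tendsto_pow_atTop_nhds_zero_of_lt_one (by norm_num) (by norm_num)
    simpa using (htend r hr).add (hpow.const_mul r)

theorem tendsto_iterate_nhds_zero {f : ℝ → ℝ} (hf : Continuous f) (hf0 : f 0 = 0)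
    (hmaps : MapsTo f (Ici 0) (Ici 0)) (hlt : ∀ x, 0 < x → f x < x) {x : ℝ} (hx : 0 ≤ x) :
    Tendsto (fun k => f^[k] x) atTop (𝓝 0) := by
  have hnn : ∀ k, 0 ≤ f^[k] x := fun k => hmaps.iterate k hx
  have hanti : Antitone fun k => f^[k] x := by
    refine antitone_nat_of_succ_le fun k => ?_
    rw [Function.iterate_succ_apply']
    rcases (hnn k).eq_or_lt with h | h
    · rw [← h, hf0]
    · exact (hlt _ h).le
  have hlim := tendsto_atTop_ciInf hanti ⟨0, forall_mem_range.2 hnn⟩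
  set L := ⨅ k, f^[k] x
  have hfix : f L = L := by
    refine tendsto_nhds_unique ((hf.tendsto L).comp hlim) ?_
    refine ((tendsto_add_atTop_iff_nat 1).2 hlim).congr fun k => ?_
    exact Function.iterate_succ_apply' f k x
  have hL : 0 ≤ L := le_ciInf hnn
  rcases hL.eq_or_lt with h | h
  · rwa [← h] at hlim
  · exact absurd hfix (hlt L h).ne

def decayEnvelope (a : ℝ → ℝ) (v : ℝ) : ℝ :=
  sSup ((fun t => t - a t) '' Icc 0 (max v 0))

section DecayEnvelope

variable {a : ℝ → ℝ}

theorem decayEnvelope_nonempty (v : ℝ) : ((fun t => t - a t) '' Icc 0 (max v 0)).Nonempty :=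
  ⟨_, mem_image_of_mem _ ⟨le_rfl, le_max_right v 0⟩⟩

theorem decayEnvelope_bddAbove (ha : IsClassK a) (v : ℝ) :
    BddAbove ((fun t => t - a t) '' Icc 0 (max v 0)) :=
  ⟨max v 0, forall_mem_image.2 fun t ht => by linarith [ht.2, ha.nonneg ht.1]⟩

theorem le_decayEnvelope (ha : IsClassK a) {v t : ℝ} (ht : t ∈ Icc 0 (max v 0)) :
    t - a t ≤ decayEnvelope a v :=
  le_csSup (decayEnvelope_bddAbove ha v) (mem_image_of_mem _ ht)

theorem decayEnvelope_nonneg (ha : IsClassK a) (v : ℝ) : 0 ≤ decayEnvelope a v := by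
  simpa [ha.map_zero] using le_decayEnvelope ha ⟨le_rfl, le_max_right v 0⟩

theorem iterate_decayEnvelope_nonneg (ha : IsClassK a) (k : ℕ) {v : ℝ} (hv : 0 ≤ v) :
    0 ≤ (decayEnvelope a)^[k] v :=
  MapsTo.iterate (fun x _ => decayEnvelope_nonneg ha x) k hv

theorem sub_le_decayEnvelope (ha : IsClassK a) {v : ℝ} (hv : 0 ≤ v) :
    v - a v ≤ decayEnvelope a v :=
  le_decayEnvelope ha ⟨hv, le_max_left v 0⟩

theorem decayEnvelope_le (ha : IsClassK a) {v : ℝ} (hv : 0 ≤ v) : decayEnvelope a v ≤ v :=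
  csSup_le (decayEnvelope_nonempty v) <| forall_mem_image.2 fun t ht => by
    linarith [ht.2, ha.nonneg ht.1, max_eq_left hv]

theorem decayEnvelope_zero (ha : IsClassK a) : decayEnvelope a 0 = 0 :=
  le_antisymm (decayEnvelope_le ha le_rfl) (decayEnvelope_nonneg ha 0)

theorem monotone_decayEnvelope (ha : IsClassK a) : Monotone (decayEnvelope a) := fun _ _ huv =>
  csSup_le_csSup (decayEnvelope_bddAbove ha _) (decayEnvelope_nonempty _) <|
    image_mono <| Icc_subset_Icc le_rfl <| max_le_max huv le_rfl

theorem decayEnvelope_le_add (ha : IsClassK a) (x y : ℝ) :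
    decayEnvelope a x ≤ decayEnvelope a y + dist x y := by
  rcases le_total x y with hxy | hyx
  · exact le_add_of_le_of_nonneg (monotone_decayEnvelope ha hxy) dist_nonneg
  have hdist : max x 0 - max y 0 ≤ dist x y := by
    rw [Real.dist_eq, abs_of_nonneg (sub_nonneg.2 hyx)]
    exact (le_abs_self _).trans <| (abs_max_sub_max_le_abs x y 0).trans_eq <|
      abs_of_nonneg (sub_nonneg.2 hyx)
  refine csSup_le (decayEnvelope_nonempty x) <| forall_mem_image.2 fun t ht => ?_
  rcases le_total t (max y 0) with hty | hyt
  · linarith [le_decayEnvelope ha ⟨ht.1, hty⟩, dist_nonneg (x := x) (y := y)]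
  · -- Past `max y 0`, `t - a t` grows no faster than `t`, since `a` is monotone.
    have hy0 : (0 : ℝ) ≤ max y 0 := le_max_right y 0
    have hay : a (max y 0) ≤ a t := ha.monotoneOn hy0 ht.1 hyt
    linarith [le_decayEnvelope ha ⟨hy0, le_refl (max y 0)⟩, ht.2]

theorem continuous_decayEnvelope (ha : IsClassK a) : Continuous (decayEnvelope a) :=
  (LipschitzWith.of_le_add (decayEnvelope_le_add ha)).continuous

/-- The supremum is attained by compactness, at some `t ≤ v` where `t - a t < v`. -/
theorem decayEnvelope_lt_self (ha : IsClassK a) {v : ℝ} (hv : 0 < v) :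
    decayEnvelope a v < v := by
  have hcompact : IsCompact ((fun t => t - a t) '' Icc 0 (max v 0)) :=
    isCompact_Icc.image_of_continuousOn <|
      (continuousOn_id.sub ha.continuousOn).mono fun t ht => ht.1
  obtain ⟨t, ht, heq⟩ := hcompact.sSup_mem (decayEnvelope_nonempty v)
  rw [max_eq_left hv.le] at ht
  change t - a t = decayEnvelope a v at heq
  rw [← heq]
  rcases ht.1.eq_or_lt with h0 | htpos
  · simpa [← h0, ha.map_zero] using hv
  · linarith [ht.2, ha.pos htpos]

theorem tendsto_iterate_decayEnvelope (ha : IsClassK a) {v : ℝ} (hv : 0 ≤ v) :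
    Tendsto (fun k => (decayEnvelope a)^[k] v) atTop (𝓝 0) :=
  tendsto_iterate_nhds_zero (continuous_decayEnvelope ha) (decayEnvelope_zero ha)
    (fun x _ => decayEnvelope_nonneg ha x) (fun _ => decayEnvelope_lt_self ha) hv

theorem isClassKL_iterate_decayEnvelope {α ψ : ℝ → ℝ} (ha : IsClassK a) (hα : IsClassK α)
    (hψ : IsClassK ψ) :
    IsClassKL fun r k => ψ ((decayEnvelope a)^[k] (α r)) + r * 2⁻¹ ^ k := by
  have hT : Monotone (decayEnvelope a) := monotone_decayEnvelope ha
  have hnn : ∀ k r, 0 ≤ r → 0 ≤ (decayEnvelope a)^[k] (α r) := fun k _ hr =>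
    iterate_decayEnvelope_nonneg ha k (hα.nonneg hr)
  refine isClassKL_add_geometric (fun k => ?_) (fun k x hx y hy hxy => ?_) (fun k => ?_)
    (fun r hr k l hkl => ?_) (fun r hr => ?_)
  · exact hψ.continuousOn.comp
      ((continuous_decayEnvelope ha).iterate k |>.comp_continuousOn hα.continuousOn)
      fun r hr => hnn k r hr
  · exact hψ.monotoneOn (hnn k x hx) (hnn k y hy) (hT.iterate k (hα.monotoneOn hx hy hxy))
  · simp [hα.map_zero, Function.iterate_fixed (decayEnvelope_zero ha), hψ.map_zero]
  · exact hψ.monotoneOn (hnn l r hr) (hnn k r hr)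
      (hT.antitone_iterate_of_map_le (decayEnvelope_le ha (hα.nonneg hr)) hkl)
  · have hlim : Tendsto (fun k => (decayEnvelope a)^[k] (α r)) atTop (𝓝[Ici 0] 0) :=
      tendsto_nhdsWithin_iff.2 ⟨tendsto_iterate_decayEnvelope ha (hα.nonneg hr),
        Eventually.of_forall fun k => hnn k r hr⟩
    simpa [hψ.map_zero, Function.comp_def] using
      (hψ.continuousOn.continuousWithinAt self_mem_Ici).tendsto.comp hlim

end DecayEnvelope

theorem le_max_iterate_of_le_max {T : ℝ → ℝ} (hT : Monotone T) (hTle : ∀ x, 0 ≤ x → T x ≤ x)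
    {v c : ℕ → ℝ} {x : ℝ} (hc : Monotone c) (hc0 : 0 ≤ c 0) (h0 : v 0 ≤ x)
    (hstep : ∀ k, v (k + 1) ≤ max (T (v k)) (c (k + 1))) (k : ℕ) :
    v k ≤ max (T^[k] x) (c k) := by
  induction k with
  | zero => exact le_max_of_le_left h0
  | succ k ih =>
    have hTc : T (c k) ≤ c (k + 1) :=
      (hTle _ (hc0.trans (hc k.zero_le))).trans (hc k.le_succ)
    calc v (k + 1) ≤ max (T (v k)) (c (k + 1)) := hstep k
      _ ≤ max (max (T^[k + 1] x) (T (c k))) (c (k + 1)) := by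
        rw [Function.iterate_succ_apply', ← hT.map_max]
        exact max_le_max_right _ (hT ih)
      _ ≤ max (T^[k + 1] x) (c (k + 1)) := by
        rw [max_assoc, max_eq_right hTc]

theorem le_max_decayEnvelope_of_le {α ψ : ℝ → ℝ} (hα : IsClassK α) (hψ : IsClassK ψ)
    (hψα : ∀ x, 0 ≤ x → ψ (α x) = x) {v v' s : ℝ} (hv : 0 ≤ v) (hs : 0 ≤ s)
    (h : v' ≤ v - α v + s) :
    v' ≤ max (decayEnvelope (fun t => 2⁻¹ * α t) v) (ψ (2 * s) + s) := by
  rcases le_or_gt s (2⁻¹ * α v) with hsmall | hlarge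
  · refine le_max_of_le_left ((?_ : v' ≤ v - 2⁻¹ * α v).trans ?_)
    · linarith
    · exact sub_le_decayEnvelope (hα.const_mul (by norm_num)) hv
  · have hvψ : v ≤ ψ (2 * s) := by
      calc v = ψ (α v) := (hψα v hv).symm
        _ ≤ ψ (2 * s) := hψ.monotoneOn (hα.nonneg hv) (by simpa using hs) (by linarith)
    refine le_max_of_le_right ?_
    linarith [hα.nonneg hv]

section RunningMax

variable {α : Type*} [SemilatticeSup α] (u : ℕ → α)

theorem le_sup'_range_add_one (k : ℕ) :
    u k ≤ (Finset.range (k + 1)).sup' Finset.nonempty_range_add_one u :=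
  Finset.le_sup' u (Finset.self_mem_range_succ k)

theorem monotone_sup'_range_add_one :
    Monotone fun k => (Finset.range (k + 1)).sup' Finset.nonempty_range_add_one u :=
  fun _ _ hkl => Finset.sup'_mono u (Finset.range_subset_range.2 (Nat.succ_le_succ hkl)) _

end RunningMax

theorem le_max_iterate_decayEnvelope_of_dissipation {α ψ σ : ℝ → ℝ} (hα : IsClassK α)
    (hψ : IsClassK ψ) (hψα : ∀ x, 0 ≤ x → ψ (α x) = x) (hσ : IsClassK σ) {v s w : ℕ → ℝ}
    {x : ℝ} (hv : ∀ k, 0 ≤ v k) (hs : ∀ k, 0 ≤ s k) (hw : Monotone w)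
    (hsw : ∀ k, s k ≤ w (k + 1)) (hw0 : 0 ≤ w 0) (h0 : v 0 ≤ x)
    (hstep : ∀ k, v (k + 1) ≤ v k - α (v k) + σ (s k)) (k : ℕ) :
    v k ≤ max ((decayEnvelope fun t => 2⁻¹ * α t)^[k] x) (ψ (2 * σ (w k)) + σ (w k)) := by
  have ha : IsClassK fun t => 2⁻¹ * α t := hα.const_mul (by norm_num)
  have hB : IsClassK fun r => ψ (2 * σ r) + σ r := (hψ.comp (hσ.const_mul two_pos)).add hσ
  have hwnn : ∀ k, 0 ≤ w k := fun k => hw0.trans (hw k.zero_le)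
  refine le_max_iterate_of_le_max (monotone_decayEnvelope ha) (fun _ => decayEnvelope_le ha)
    (fun k l hkl => hB.monotoneOn (hwnn k) (hwnn l) (hw hkl)) (hB.nonneg hw0) h0
    (fun k => ?_) k
  exact (le_max_decayEnvelope_of_le hα hψ hψα (hv k) (hσ.nonneg (hs k)) (hstep k)).trans
    (max_le_max_left _ (hB.monotoneOn (hs k) (hwnn _) (hsw k)))

theorem iss_lyapunov_two_outputs_asymptotic_general
    {nξ nω n1 n2 : ℕ}
    (Ξ : Set (Vec nξ))
    (Ωc : Vec nξ → Set (Vec nω))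
    (Fc : Vec nξ → Vec nω → Vec nξ)
    (G1 : Vec nξ → Vec n1) (G2 : Vec nξ → Vec n2)
    (X : Set (Vec nξ)) (hXΞ : X ⊆ Ξ)
    (hXinv : ∀ ξ ∈ X, ∀ ω ∈ Ωc ξ, Fc ξ ω ∈ X)
    (V : Vec nξ → ℝ) (hVnn : ∀ ξ ∈ Ξ, 0 ≤ V ξ)
    (α1 α2 α3 σ : ℝ → ℝ)
    (hα1 : IsClassKInf α1) (hα2 : IsClassKInf α2) (hα3 : IsClassKInf α3) (hσ : IsClassK σ)
    (hlow : ∀ ξ ∈ X, α1 ‖G1 ξ‖ ≤ V ξ)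
    (hup : ∀ ξ ∈ X, V ξ ≤ α2 ‖G2 ξ‖)
    (hdec : ∀ ξ ∈ X, ∀ ω ∈ Ωc ξ, V (Fc ξ ω) ≤ V ξ - α3 (V ξ) + σ ‖ω‖) :
    ∃ (β : ℝ → ℕ → ℝ) (γ : ℝ → ℝ), IsClassKL β ∧ IsClassK γ ∧
      ∀ (ξ : ℕ → Vec nξ) (ω : ℕ → Vec nω),
        (∀ k, ξ (k + 1) = Fc (ξ k) (ω k)) → (∀ k, ω k ∈ Ωc (ξ k)) → ξ 0 ∈ X →
        ∀ k : ℕ, ‖G1 (ξ k)‖ ≤ β ‖G2 (ξ 0)‖ k +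
          γ ((Finset.range (k + 1)).sup' Finset.nonempty_range_add_one fun i => ‖ω i‖) := by
  obtain ⟨ψ1, hψ1, hψ1α1⟩ := hα1.exists_leftInverse
  obtain ⟨ψ3, hψ3, hψ3α3⟩ := hα3.exists_leftInverse
  have ha : IsClassK fun t => 2⁻¹ * α3 t := hα3.isClassK.const_mul (by norm_num)
  set T := decayEnvelope fun t => 2⁻¹ * α3 t
  set B := fun s => ψ3 (2 * σ s) + σ s
  have hB : IsClassK B := (hψ3.comp (hσ.const_mul two_pos)).add hσ
  refine ⟨fun r k => ψ1 (T^[k] (α2 r)) + r * 2⁻¹ ^ k, ψ1 ∘ B,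
    isClassKL_iterate_decayEnvelope ha hα2.isClassK hψ1, hψ1.comp hB,
    fun ξ ω hstep hω hξ0 k => ?_⟩
  set W := fun k => (Finset.range (k + 1)).sup' Finset.nonempty_range_add_one fun i => ‖ω i‖
  have hW : ∀ k, 0 ≤ W k := fun k => (norm_nonneg (ω k)).trans (le_sup'_range_add_one (‖ω ·‖) k)
  have hX : ∀ k, ξ k ∈ X := Nat.rec hξ0 fun k hk => hstep k ▸ hXinv _ hk _ (hω k)
  have hVle : V (ξ k) ≤ max (T^[k] (α2 ‖G2 (ξ 0)‖)) (B (W k)) :=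
    le_max_iterate_decayEnvelope_of_dissipation hα3.isClassK hψ3 hψ3α3 hσ
      (fun k => hVnn _ (hXΞ (hX k))) (fun k => norm_nonneg (ω k)) (monotone_sup'_range_add_one _)
      (fun k => (le_sup'_range_add_one (‖ω ·‖) k).trans (monotone_sup'_range_add_one _ k.le_succ))
      (hW 0) (hup _ hξ0)
      (fun k => hstep k ▸ hdec _ (hX k) _ (hω k)) k
  have hT : 0 ≤ T^[k] (α2 ‖G2 (ξ 0)‖) :=
    iterate_decayEnvelope_nonneg ha k (hα2.isClassK.nonneg (norm_nonneg _))
  calc ‖G1 (ξ k)‖ = ψ1 (α1 ‖G1 (ξ k)‖) := (hψ1α1 _ (norm_nonneg _)).symm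
    _ ≤ ψ1 (max (T^[k] (α2 ‖G2 (ξ 0)‖)) (B (W k))) :=
      hψ1.monotoneOn (hα1.isClassK.nonneg (norm_nonneg _)) (le_max_of_le_left hT)
        ((hlow _ (hX k)).trans hVle)
    _ ≤ ψ1 (T^[k] (α2 ‖G2 (ξ 0)‖)) + ψ1 (B (W k)) := hψ1.map_max_le_add hT (hB.nonneg (hW k))
    _ ≤ _ := by
      have : 0 ≤ ‖G2 (ξ 0)‖ * 2⁻¹ ^ k := by positivity
      simp only [Function.comp_apply, W]
      linarith

/-- **ISS Lyapunov theorem with respect to two outputs, asymptotic case (Theorem 2).** -/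
theorem iss_lyapunov_two_outputs_asymptotic
    {nξ nω n1 n2 : ℕ}
    (Ξ : Set (Vec nξ)) (hΞ : IsClosed Ξ)
    (Ωc : Vec nξ → Set (Vec nω)) (hΩ0 : ∀ ξ ∈ Ξ, (0 : Vec nω) ∈ Ωc ξ)
    (Fc : Vec nξ → Vec nω → Vec nξ)
    (hFΞ : ∀ ξ ∈ Ξ, ∀ ω ∈ Ωc ξ, Fc ξ ω ∈ Ξ)
    (G1 : Vec nξ → Vec n1) (G2 : Vec nξ → Vec n2)
    (X : Set (Vec nξ)) (hXcl : IsClosed X) (hXΞ : X ⊆ Ξ)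
    (hXinv : ∀ ξ ∈ X, ∀ ω ∈ Ωc ξ, Fc ξ ω ∈ X)
    (V : Vec nξ → ℝ) (hVnn : ∀ ξ ∈ Ξ, 0 ≤ V ξ)
    (α1 α2 α3 σ : ℝ → ℝ)
    (hα1 : IsClassKInf α1) (hα2 : IsClassKInf α2) (hα3 : IsClassKInf α3) (hσ : IsClassK σ)
    (hlow : ∀ ξ ∈ X, α1 ‖G1 ξ‖ ≤ V ξ)
    (hup : ∀ ξ ∈ X, V ξ ≤ α2 ‖G2 ξ‖)
    (hdec : ∀ ξ ∈ X, ∀ ω ∈ Ωc ξ, V (Fc ξ ω) ≤ V ξ - α3 (V ξ) + σ ‖ω‖) :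
    ∃ (β : ℝ → ℕ → ℝ) (γ : ℝ → ℝ), IsClassKL β ∧ IsClassK γ ∧
      ∀ (ξ : ℕ → Vec nξ) (ω : ℕ → Vec nω),
        (∀ k, ξ (k + 1) = Fc (ξ k) (ω k)) → (∀ k, ω k ∈ Ωc (ξ k)) → ξ 0 ∈ X →
        ∀ k : ℕ, ‖G1 (ξ k)‖ ≤ β ‖G2 (ξ 0)‖ k +
          γ ((Finset.range (k + 1)).sup' Finset.nonempty_range_add_one fun i => ‖ω i‖) :=
  iss_lyapunov_two_outputs_asymptotic_general Ξ Ωc Fc G1 G2 X hXΞ hXinv V hVnn α1 α2 α3 σ hα1 hα2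
    hα3 hσ hlow hup hdec
end
end

section
/- (Estimator Lyapunov function implies robust global exponential stability; Theorem 1 of the extended paper, sequence form.) Let c1, c2, c3, c4 > 0 with c3 < c2. Set λ_e := √(1 − c3/c2) ∈ (0,1), c_{e,1} := √(c2/c1), and c_{e,2} := √(c4/c1). Then for every triple of sequences e : ℕ → ℝ^{n}, w̃ : ℕ → ℝ^{m}, and V : ℕ → ℝ satisfying, for all k ∈ ℕ, c1‖e(k)‖² ≤ V(k) ≤ c2‖e(k)‖² and V(k+1) ≤ V(k) − c3‖e(k)‖² + c4‖w̃(k)‖², one has ‖e(k)‖ ≤ c_{e,1} λ_e^k ‖e(0)‖ + c_{e,2} Σ_{j=1}^{k} λ_e^{j−1} ‖w̃(k−j)‖ for all k ∈ ℕ. -/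
/-!
With `L = 1 - c3 / c2`, the upper bound `V ≤ c2 ‖e‖²` turns the decrease condition into the
contraction `V (k+1) ≤ L V k + c4 ‖w̃ k‖²`, which unrolls (discrete Grönwall) to
`V k ≤ L^k V 0 + c4 ∑ L^(j-1) ‖w̃ (k-j)‖²`. The sum is at most the square of
`∑ √L^(j-1) ‖w̃ (k-j)‖`, so dividing by `c1` bounds `‖e k‖²` by `a² + b²`, where `a + b` is the
claimed bound.
-/

open scoped BigOperators

noncomputable section

open Finset

theorem sum_Icc_pow_mul_succ {R : Type*} [CommSemiring R] (L : R) (u : ℕ → R) (k : ℕ) :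
    ∑ j ∈ Icc 1 (k + 1), L ^ (j - 1) * u (k + 1 - j) =
      u k + L * ∑ j ∈ Icc 1 k, L ^ (j - 1) * u (k - j) := by
  rw [← Ico_add_one_right_eq_Icc, ← Ico_add_one_right_eq_Icc, sum_Ico_eq_sum_range,
    sum_Ico_eq_sum_range]
  simp only [Nat.add_sub_cancel, Nat.add_sub_cancel_left]
  rw [sum_range_succ', mul_sum, add_comm]
  congr 1
  · simp
  · refine sum_congr rfl fun i _ => ?_
    rw [show k + 1 - (1 + (i + 1)) = k - (1 + i) by omega, pow_succ']
    ring

theorem le_one_sub_div_mul_add {c2 c3 x v v' d : ℝ} (hc2 : 0 < c2) (hc3 : 0 ≤ c3)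
    (hup : v ≤ c2 * x) (hdec : v' ≤ v - c3 * x + d) : v' ≤ (1 - c3 / c2) * v + d := by
  have hdrop : c3 / c2 * v ≤ c3 * x := by
    rw [div_mul_eq_mul_div, div_le_iff₀ hc2, mul_assoc]
    exact mul_le_mul_of_nonneg_left (by linarith) hc3
  linarith

theorem le_pow_mul_add_sum_of_le_mul_add {R : Type*} [CommSemiring R] [PartialOrder R]
    [IsOrderedRing R] {L : R} (hL : 0 ≤ L) {V u : ℕ → R}
    (h : ∀ k, V (k + 1) ≤ L * V k + u k) (k : ℕ) :
    V k ≤ L ^ k * V 0 + ∑ j ∈ Icc 1 k, L ^ (j - 1) * u (k - j) := by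
  induction k with
  | zero => simp
  | succ k ih =>
    calc V (k + 1) ≤ L * V k + u k := h k
      _ ≤ L * (L ^ k * V 0 + ∑ j ∈ Icc 1 k, L ^ (j - 1) * u (k - j)) + u k := by gcongr
      _ = _ := by rw [sum_Icc_pow_mul_succ]; ring

theorem sum_pow_mul_sq_le_sq_sum_sqrt {ι : Type*} (s : Finset ι) {L : ℝ} (hL : 0 ≤ L)
    (p : ι → ℕ) {a : ι → ℝ} (ha : ∀ i ∈ s, 0 ≤ a i) :
    ∑ i ∈ s, L ^ p i * a i ^ 2 ≤ (∑ i ∈ s, √L ^ p i * a i) ^ 2 := by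
  have hsq : ∀ i, L ^ p i * a i ^ 2 = (√L ^ p i * a i) ^ 2 := fun i => by
    rw [mul_pow, ← pow_mul, mul_comm (p i), pow_mul, Real.sq_sqrt hL]
  simp only [hsq]
  exact sum_sq_le_sq_sum_of_nonneg fun i hi => mul_nonneg (by positivity) (ha i hi)

theorem le_add_of_sq_le_sq_add_sq {x a b : ℝ} (ha : 0 ≤ a) (hb : 0 ≤ b)
    (h : x ^ 2 ≤ a ^ 2 + b ^ 2) : x ≤ a + b :=
  abs_le_of_sq_le_sq' (by nlinarith) (add_nonneg ha hb) |>.2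

/-- **Estimator Lyapunov function implies robust global exponential stability
(Theorem 1 of the extended paper, sequence form).** -/
theorem estimator_lyapunov_implies_rges
    {n m : ℕ} (c1 c2 c3 c4 : ℝ)
    (hc1 : 0 < c1) (hc2 : 0 < c2) (hc3 : 0 < c3) (hc4 : 0 < c4) (hc32 : c3 < c2)
    (e : ℕ → Vec n) (wt : ℕ → Vec m) (V : ℕ → ℝ)
    (hlow : ∀ k, c1 * ‖e k‖ ^ 2 ≤ V k)
    (hup : ∀ k, V k ≤ c2 * ‖e k‖ ^ 2)
    (hdec : ∀ k, V (k + 1) ≤ V k - c3 * ‖e k‖ ^ 2 + c4 * ‖wt k‖ ^ 2) :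
    ∀ k : ℕ, ‖e k‖ ≤ Real.sqrt (c2 / c1) * Real.sqrt (1 - c3 / c2) ^ k * ‖e 0‖ +
      Real.sqrt (c4 / c1) *
        ∑ j ∈ Finset.Icc 1 k, Real.sqrt (1 - c3 / c2) ^ (j - 1) * ‖wt (k - j)‖ := by
  intro k
  set L := 1 - c3 / c2
  have hL : 0 ≤ L := sub_nonneg.2 ((div_le_one hc2).2 hc32.le)
  have hcontr : ∀ k, V (k + 1) ≤ L * V k + c4 * ‖wt k‖ ^ 2 := fun k =>
    le_one_sub_div_mul_add hc2 hc3.le (hup k) (hdec k)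
  set T := ∑ j ∈ Icc 1 k, √L ^ (j - 1) * ‖wt (k - j)‖
  have hV : V k ≤ L ^ k * (c2 * ‖e 0‖ ^ 2) + c4 * T ^ 2 := by
    calc V k ≤ L ^ k * V 0 + ∑ j ∈ Icc 1 k, L ^ (j - 1) * (c4 * ‖wt (k - j)‖ ^ 2) :=
          le_pow_mul_add_sum_of_le_mul_add hL hcontr k
      _ = L ^ k * V 0 + c4 * ∑ j ∈ Icc 1 k, L ^ (j - 1) * ‖wt (k - j)‖ ^ 2 := by
          simp_rw [mul_left_comm _ c4, ← mul_sum]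
      _ ≤ L ^ k * (c2 * ‖e 0‖ ^ 2) + c4 * T ^ 2 := by
          gcongr
          · exact hup 0
          · exact sum_pow_mul_sq_le_sq_sum_sqrt _ hL _ fun j _ => norm_nonneg _
  have hsq : ‖e k‖ ^ 2 ≤ (√(c2 / c1) * √L ^ k * ‖e 0‖) ^ 2 + (√(c4 / c1) * T) ^ 2 := by
    calc ‖e k‖ ^ 2 ≤ V k / c1 := (le_div_iff₀ hc1).2 (by linarith [hlow k])
      _ ≤ (L ^ k * (c2 * ‖e 0‖ ^ 2) + c4 * T ^ 2) / c1 := by gcongr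
      _ = _ := by
          rw [mul_pow, mul_pow, mul_pow, ← pow_mul, mul_comm k, pow_mul,
            Real.sq_sqrt hL, Real.sq_sqrt (by positivity), Real.sq_sqrt (by positivity)]
          ring
  exact le_add_of_sq_le_sq_add_sq (by positivity) (by positivity) hsq
end
end

section
/- (Proposition: global 𝒦∞ modulus of continuity on a compact set.) Let C ⊆ D ⊆ ℝ^m with C compact and D closed, and let V : D → ℝ^p be continuous. Then there exists a function α of class 𝒦∞ such that ‖V(x) − V(y)‖ ≤ α(‖x − y‖) for all x ∈ C and y ∈ D. -/
noncomputable section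

/-!
Let `ω r` be the supremum of `dist (V x) (V y)` over `x ∈ C`, `y ∈ D` with `dist x y ≤ r`. It is
finite because `D ∩ cthickening r C` is compact, it is monotone with `ω 0 = 0`, and it tends to `0`
at `0⁺` by uniform continuity of `V` on `D ∩ cthickening 1 C`. The average `F r` of `ω` over
`[r, 2r]` is continuous, monotone and squeezed between `ω r` and `ω (2r)`, so `α r = r + F r`
is a `𝒦∞` bound.
-/

open Set Metric Filter Topology

theorem isClassKInf_id_add {g : ℝ → ℝ} (hg : ContinuousOn g (Ici 0))
    (hg_mono : MonotoneOn g (Ici 0)) (hg0 : g 0 = 0) : IsClassKInf fun r => r + g r := by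
  have hg_nonneg : ∀ r, 0 ≤ r → 0 ≤ g r := fun r hr =>
    hg0 ▸ hg_mono self_mem_Ici hr hr
  refine ⟨⟨continuousOn_id.add hg, fun a ha b hb hab => add_lt_add_of_lt_of_le hab
    (hg_mono ha hb hab.le), by simp [hg0], fun r hr => add_nonneg hr (hg_nonneg r hr)⟩, ?_⟩
  refine tendsto_atTop_mono' atTop ?_ tendsto_id
  filter_upwards [eventually_ge_atTop 0] with r hr
  exact le_add_of_nonneg_right (hg_nonneg r hr)

section DoublingAverage

variable {ω : ℝ → ℝ}

/-- The mean of `ω` over `[r, 2r]`, written so that it makes sense at `r = 0` as well. -/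
def doublingAverage (ω : ℝ → ℝ) (r : ℝ) : ℝ :=
  ∫ u in (1 : ℝ)..2, ω (r * u)

theorem Monotone.intervalIntegrable_comp_mul (hω : Monotone ω) {r : ℝ} (hr : 0 ≤ r) {a b : ℝ} :
    IntervalIntegrable (fun u => ω (r * u)) MeasureTheory.volume a b :=
  (hω.comp fun _ _ h => mul_le_mul_of_nonneg_left h hr).intervalIntegrable

theorem Monotone.le_doublingAverage (hω : Monotone ω) {r : ℝ} (hr : 0 ≤ r) :
    ω r ≤ doublingAverage ω r := by
  have := intervalIntegral.integral_mono_on one_le_two intervalIntegrable_const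
    (hω.intervalIntegrable_comp_mul hr) fun u hu => hω (le_mul_of_one_le_right hr hu.1)
  norm_num at this
  exact this

theorem Monotone.doublingAverage_le (hω : Monotone ω) {r : ℝ} (hr : 0 ≤ r) :
    doublingAverage ω r ≤ ω (2 * r) := by
  have := intervalIntegral.integral_mono_on one_le_two (hω.intervalIntegrable_comp_mul hr)
    intervalIntegrable_const fun u hu => hω (by nlinarith [hu.2] : r * u ≤ 2 * r)
  norm_num at this
  exact this

theorem Monotone.monotoneOn_doublingAverage (hω : Monotone ω) :
    MonotoneOn (doublingAverage ω) (Ici 0) := fun _ ha _ hb hab =>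
  intervalIntegral.integral_mono_on one_le_two (hω.intervalIntegrable_comp_mul ha)
    (hω.intervalIntegrable_comp_mul hb) fun _ hu =>
    hω (mul_le_mul_of_nonneg_right hab (zero_le_one.trans hu.1))

theorem Monotone.doublingAverage_eq_of_pos (hω : Monotone ω) {r : ℝ} (hr : 0 < r) :
    doublingAverage ω r = r⁻¹ * ((∫ s in (0 : ℝ)..2 * r, ω s) - ∫ s in (0 : ℝ)..r, ω s) := by
  rw [doublingAverage, intervalIntegral.integral_comp_mul_left ω hr.ne', smul_eq_mul, mul_one,
    mul_comm r 2, intervalIntegral.integral_interval_sub_left hω.intervalIntegrable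
      hω.intervalIntegrable]

theorem Monotone.continuousOn_doublingAverage_Ioi (hω : Monotone ω) :
    ContinuousOn (doublingAverage ω) (Ioi 0) := by
  have hprim := intervalIntegral.continuous_primitive (μ := MeasureTheory.volume)
    (fun _ _ => hω.intervalIntegrable) 0
  refine ContinuousOn.congr ?_ fun r hr => hω.doublingAverage_eq_of_pos hr
  exact continuousOn_inv₀.mono (fun r hr => ne_of_gt hr) |>.mul
    ((hprim.comp (continuous_const_mul 2)).sub hprim).continuousOn

theorem Monotone.continuousWithinAt_doublingAverage_zero (hω : Monotone ω)
    (hω0 : ContinuousWithinAt ω (Ici 0) 0) :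
    ContinuousWithinAt (doublingAverage ω) (Ici 0) 0 := by
  have h2 : ContinuousWithinAt (fun r => ω (2 * r)) (Ici 0) 0 :=
    hω0.comp_of_eq (continuous_const_mul 2).continuousWithinAt
      (fun _ hr => mul_nonneg zero_le_two (mem_Ici.mp hr)) (mul_zero 2)
  have h0 : doublingAverage ω 0 = ω 0 := by norm_num [doublingAverage]
  rw [ContinuousWithinAt, h0]
  exact tendsto_of_tendsto_of_tendsto_of_le_of_le' hω0 (by simpa using h2.tendsto)
    (eventually_nhdsWithin_of_forall fun r hr => hω.le_doublingAverage hr)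
    (eventually_nhdsWithin_of_forall fun r hr => hω.doublingAverage_le hr)

theorem Monotone.continuousOn_doublingAverage (hω : Monotone ω)
    (hω0 : ContinuousWithinAt ω (Ici 0) 0) : ContinuousOn (doublingAverage ω) (Ici 0) := by
  intro r hr
  rcases (mem_Ici.mp hr).eq_or_lt with rfl | hpos
  · exact hω.continuousWithinAt_doublingAverage_zero hω0
  · exact (hω.continuousOn_doublingAverage_Ioi.continuousAt (Ioi_mem_nhds hpos)).continuousWithinAt

theorem Monotone.exists_isClassKInf_ge (hω : Monotone ω) (hω0 : ω 0 = 0)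
    (hω_cont : ContinuousWithinAt ω (Ici 0) 0) :
    ∃ α : ℝ → ℝ, IsClassKInf α ∧ ∀ r, 0 ≤ r → ω r ≤ α r := by
  refine ⟨fun r => r + doublingAverage ω r, isClassKInf_id_add
    (hω.continuousOn_doublingAverage hω_cont) hω.monotoneOn_doublingAverage
    (by simp [doublingAverage, hω0]), fun r hr => ?_⟩
  linarith [hω.le_doublingAverage hr]

end DoublingAverage

section ContinuityModulus

variable {X Y : Type*} [MetricSpace X] [PseudoMetricSpace Y] {V : X → Y} {C D : Set X}

/-- Since `sSup ∅ = 0`, this is `0` for `r < 0` or `C = ∅`. -/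
def continuityModulus (V : X → Y) (C D : Set X) (r : ℝ) : ℝ :=
  sSup ((fun p : X × X => dist (V p.1) (V p.2)) '' {p | p.1 ∈ C ∧ p.2 ∈ D ∧ dist p.1 p.2 ≤ r})

theorem mem_inter_cthickening_of_dist_le {x y : X} {r : ℝ} (hx : x ∈ C) (hy : y ∈ D)
    (hxy : dist x y ≤ r) : y ∈ D ∩ cthickening r C :=
  ⟨hy, mem_cthickening_of_dist_le y x r C hx (dist_comm x y ▸ hxy)⟩

theorem continuityModulus_nonneg (V : X → Y) (C D : Set X) (r : ℝ) :
    0 ≤ continuityModulus V C D r :=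
  Real.sSup_nonneg <| forall_mem_image.mpr fun _ _ => dist_nonneg

theorem continuityModulus_zero (V : X → Y) (C D : Set X) : continuityModulus V C D 0 = 0 := by
  refine le_antisymm (Real.sSup_le ?_ le_rfl) (continuityModulus_nonneg V C D 0)
  rintro _ ⟨⟨x, y⟩, ⟨-, -, hxy : dist x y ≤ 0⟩, rfl⟩
  simp [dist_le_zero.mp hxy]

variable [ProperSpace X] (hCD : C ⊆ D) (hC : IsCompact C) (hD : IsClosed D)
  (hV : ContinuousOn V D)
include hCD hC hD hV

theorem bddAbove_continuityModulus_set (r : ℝ) :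
    BddAbove ((fun p : X × X => dist (V p.1) (V p.2)) ''
      {p | p.1 ∈ C ∧ p.2 ∈ D ∧ dist p.1 p.2 ≤ r}) := by
  have hB := ((hC.cthickening (r := r) |>.inter_left hD).image_of_continuousOn
    (hV.mono inter_subset_left)).isBounded
  refine ⟨diam (V '' (D ∩ cthickening r C)), ?_⟩
  rintro _ ⟨⟨x, y⟩, ⟨hx, hy, hxy⟩, rfl⟩
  exact dist_le_diam_of_mem hB (mem_image_of_mem V ⟨hCD hx, self_subset_cthickening C hx⟩)
    (mem_image_of_mem V (mem_inter_cthickening_of_dist_le hx hy hxy))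

theorem dist_le_continuityModulus {x y : X} (hx : x ∈ C) (hy : y ∈ D) :
    dist (V x) (V y) ≤ continuityModulus V C D (dist x y) :=
  le_csSup (bddAbove_continuityModulus_set hCD hC hD hV _) ⟨(x, y), ⟨hx, hy, le_rfl⟩, rfl⟩

theorem monotone_continuityModulus : Monotone (continuityModulus V C D) := by
  intro a b hab
  refine Real.sSup_le ?_ (continuityModulus_nonneg V C D b)
  rintro _ ⟨⟨x, y⟩, ⟨hx, hy, hxy⟩, rfl⟩
  exact le_csSup (bddAbove_continuityModulus_set hCD hC hD hV b)
    ⟨(x, y), ⟨hx, hy, hxy.trans hab⟩, rfl⟩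

theorem continuousWithinAt_continuityModulus_zero :
    ContinuousWithinAt (continuityModulus V C D) (Ici 0) 0 := by
  have hunif := Metric.uniformContinuousOn_iff.mp
    ((hC.cthickening (r := 1) |>.inter_left hD).uniformContinuousOn_of_continuous
      (hV.mono inter_subset_left))
  rw [Metric.continuousWithinAt_iff, continuityModulus_zero]
  intro ε hε
  obtain ⟨δ, hδ, hUC⟩ := hunif (ε / 2) (half_pos hε)
  refine ⟨min δ 1, lt_min hδ one_pos, fun {r} hr hrδ => ?_⟩
  rw [Real.dist_eq, sub_zero, abs_of_nonneg hr] at hrδ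
  rw [Real.dist_0_eq_abs, abs_of_nonneg (continuityModulus_nonneg V C D r)]
  refine (Real.sSup_le ?_ (half_pos hε).le).trans_lt (half_lt_self hε)
  rintro _ ⟨⟨x, y⟩, ⟨hx, hy, hxy⟩, rfl⟩
  exact (hUC x ⟨hCD hx, self_subset_cthickening C hx⟩ y
    (mem_inter_cthickening_of_dist_le hx hy (hxy.trans (hrδ.le.trans (min_le_right _ _))))
    (hxy.trans_lt (hrδ.trans_le (min_le_left _ _)))).le

end ContinuityModulus

/-- **Global 𝒦∞ modulus of continuity on a compact set (Proposition 20 of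
Allan et al., as used in the paper).** -/
theorem kinf_modulus_of_continuity
    {m p : ℕ} (C D : Set (Vec m)) (hCD : C ⊆ D) (hC : IsCompact C) (hD : IsClosed D)
    (V : Vec m → Vec p) (hV : ContinuousOn V D) :
    ∃ α : ℝ → ℝ, IsClassKInf α ∧ ∀ x ∈ C, ∀ y ∈ D, ‖V x - V y‖ ≤ α ‖x - y‖ := by
  obtain ⟨α, hα, hle⟩ := (monotone_continuityModulus hCD hC hD hV).exists_isClassKInf_ge
    (continuityModulus_zero V C D) (continuousWithinAt_continuityModulus_zero hCD hC hD hV)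
  refine ⟨α, hα, fun x hx y hy => ?_⟩
  rw [← dist_eq_norm, ← dist_eq_norm]
  exact (dist_le_continuityModulus hCD hC hD hV hx hy).trans (hle _ dist_nonneg)
end
end

section
/- (Proposition: bound on the mismatch-induced estimator noise; Proposition 8 of the paper.) Suppose the SSTP setup, nominal consistency, differentiability, and mismatch-correction assumptions of the context hold. Then for any compact set X ⊆ 𝕏 there exist σ_w and σ_α of class 𝒦∞ such that for all z = (x,u) ∈ X × 𝕌 and all α = (s_sp, w_P), α⁺ ∈ 𝒜_c, the noises w := f_P(x + Δx_s(α), u, w_P) − f(x, u, d_s(α)) − Δx_s(α⁺), w_d := d_s(α⁺) − d_s(α), v := h_P(x + Δx_s(α), u, w_P) − h(x, u, d_s(α)) satisfy ‖(w, w_d, v)‖ ≤ σ_w(‖w_P‖)·‖z − z_s(β)‖ + σ_α(‖α⁺ − α‖), where β := (s_sp, d_s(α)). -/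
/-!
With `F = (f, h)` and `F_P = (f_P, h_P)` viewed as maps of `z = (x, u)`, the correction equations
and nominal consistency on `𝕏 × 𝕌` write the noise as `(a + b, w_d, e)`: `(a, e)` is the increment
from `z_s(β)` to `z` of the mismatch defect
`z ↦ F_P(z + Δx_s, w_P) - F(z, d_s) - (F_P(z, 0) - F(z, 0))`, and `(b, w_d)` is the increment of
`(-Δx_s, d_s)` from `α` to `α⁺`. The `z`-derivative of the defect is continuous in `z` and in the
compactly ranging `(Δx_s, d_s, w_P)`, and vanishes at `w_P = 0`, where uniqueness of the corrections
forces `Δx_s = 0` and `d_s = 0`; the mean value inequality on a ball gives the `σ_w` term, and a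
modulus of continuity of `(Δx_s, d_s)` on `𝒜_c` the `σ_α` term. A continuous `Θ ≥ 0` on a compact
set that vanishes with a continuous size `ρ ≥ 0` is bounded by `σ ∘ ρ` with `σ ∈ 𝒦∞`: its sublevel
supremum `m t = sup {Θ | ρ ≤ t}` is dominated by `t + inf_{δ > 0} (m δ + D t / δ)`, which is
continuous and strictly increasing.
-/

open scoped BigOperators

noncomputable section

/-- Parameters `β = (r_sp, u_sp, y_sp, d)` of the steady-state target problem. -/
abbrev Param (nu ny nd nr : ℕ) : Type := Vec nr × Vec nu × Vec ny × Vec nd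

/-- Data of the steady-state target problem (SSTP) setup. -/
structure SSTPData (n nu ny nd nr nc : ℕ) where
  X : Set (Vec n)
  U : Set (Vec nu)
  Y : Set (Vec ny)
  D : Set (Vec nd)
  f : Vec n → Vec nu → Vec nd → Vec n
  h : Vec n → Vec nu → Vec nd → Vec ny
  g : Vec nu → Vec ny → Vec nr
  cbar : Vec nu → Vec ny → Fin nc → ℝ
  bbar : Fin nc → ℝ
  ls : Vec nu → Vec ny → ℝ

namespace SSTPData

variable {n nu ny nd nr nc : ℕ} (S : SSTPData n nu ny nd nr nc)

/-- Tightened input-output constraint set `Z̄_y`. -/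
def Zbar : Set (Vec nu × Vec ny) :=
  {p | p.1 ∈ S.U ∧ p.2 ∈ S.Y ∧ ∀ i, S.cbar p.1 p.2 i + S.bbar i ≤ 0}

/-- Offset-free steady-state pairs `𝒵_O(r_sp, d)`. -/
def ZO (rsp : Vec nr) (d : Vec nd) : Set (Vec n × Vec nu) :=
  {z | z.1 ∈ S.X ∧ z.2 ∈ S.U ∧ z.1 = S.f z.1 z.2 d ∧
    (z.2, S.h z.1 z.2 d) ∈ S.Zbar ∧ rsp = S.g z.2 (S.h z.1 z.2 d)}

/-- Feasible SSTP parameters `ℬ`. -/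
def B : Set (Param nu ny nd nr) :=
  {β | (β.2.1, β.2.2.1) ∈ S.Zbar ∧ β.2.2.2 ∈ S.D ∧ (S.ZO β.1 β.2.2.2).Nonempty}

/-- SSTP objective. -/
def Vs (β : Param nu ny nd nr) (z : Vec n × Vec nu) : ℝ :=
  S.ls (z.2 - β.2.1) (S.h z.1 z.2 β.2.2.2 - β.2.2.1)

/-- The perturbed parameter set `B̂_c` built from `B_c` and `δ0`. -/
def Bhat (Bc : Set (Param nu ny nd nr)) (δ0 : ℝ) : Set (Param nu ny nd nr) :=
  {βh | βh.2.2.2 ∈ S.D ∧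
    ∃ d : Vec nd, (βh.1, βh.2.1, βh.2.2.1, d) ∈ Bc ∧ ‖d - βh.2.2.2‖ ≤ δ0}

end SSTPData

/-- Standing assumptions on the SSTP setup. -/
structure SSTPAssumptions {n nu ny nd nr nc : ℕ} (S : SSTPData n nu ny nd nr nc) : Prop where
  hXcl : IsClosed S.X
  hYcl : IsClosed S.Y
  hUcp : IsCompact S.U
  hDcp : IsCompact S.D
  hX0 : (0 : Vec n) ∈ S.X
  hU0 : (0 : Vec nu) ∈ S.U
  hY0 : (0 : Vec ny) ∈ S.Y
  hD0 : (0 : Vec nd) ∈ S.D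
  hf : Continuous fun p : Vec n × Vec nu × Vec nd => S.f p.1 p.2.1 p.2.2
  hh : Continuous fun p : Vec n × Vec nu × Vec nd => S.h p.1 p.2.1 p.2.2
  hg : Continuous fun p : Vec nu × Vec ny => S.g p.1 p.2
  hf0 : S.f 0 0 0 = 0
  hh0 : S.h 0 0 0 = 0
  hg0 : S.g 0 0 = 0
  hcbar : Continuous fun p : Vec nu × Vec ny => S.cbar p.1 p.2
  hbbar : ∀ i, 0 < S.bbar i
  hback : ∀ i, S.cbar 0 0 i + S.bbar i < 0
  hls_cont : Continuous fun p : Vec nu × Vec ny => S.ls p.1 p.2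
  hls_nonneg : ∀ u y, 0 ≤ S.ls u y
  hsstp_exist : ∀ β ∈ S.B, IsCompact (S.ZO β.1 β.2.2.2) ∨
    ∀ z : ℕ → Vec n × Vec nu, (∀ k, z k ∈ S.ZO β.1 β.2.2.2) →
      Filter.Tendsto (fun k => ‖z k‖) Filter.atTop Filter.atTop →
      Filter.Tendsto (fun k => S.Vs β (z k)) Filter.atTop Filter.atTop

def concaveMajorant (h : ℝ → ℝ) (D t : ℝ) : ℝ :=
  ⨅ δ : Set.Ioi (0 : ℝ), (h δ + D * max t 0 / δ)

section ConcaveMajorant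

variable {h : ℝ → ℝ} {D : ℝ}

theorem concaveMajorant_le (hh : ∀ t, 0 ≤ h t) (hD : 0 ≤ D) (t : ℝ) {δ : ℝ} (hδ : 0 < δ) :
    concaveMajorant h D t ≤ h δ + D * max t 0 / δ := by
  refine ciInf_le ⟨0, ?_⟩ (⟨δ, hδ⟩ : Set.Ioi (0 : ℝ))
  rintro _ ⟨δ', rfl⟩
  have : (0 : ℝ) < δ' := δ'.2
  have := hh δ'
  positivity

theorem concaveMajorant_nonneg (hh : ∀ t, 0 ≤ h t) (hD : 0 ≤ D) (t : ℝ) :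
    0 ≤ concaveMajorant h D t :=
  le_ciInf fun δ => by
    have : (0 : ℝ) < δ := δ.2
    have := hh δ
    positivity

theorem monotone_concaveMajorant (hh : ∀ t, 0 ≤ h t) (hD : 0 ≤ D) :
    Monotone (concaveMajorant h D) := fun t t' htt' =>
  le_ciInf fun δ => (concaveMajorant_le hh hD t δ.2).trans <| by
    have : (0 : ℝ) < δ := δ.2
    gcongr

theorem le_concaveMajorant (hh : ∀ t, 0 ≤ h t) (hmono : Monotone h) (hhD : ∀ t, h t ≤ D)
    {t : ℝ} (ht : 0 ≤ t) : h t ≤ concaveMajorant h D t :=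
  le_ciInf fun δ => by
    have hδ : (0 : ℝ) < δ := δ.2
    have hD : 0 ≤ D := (hh 0).trans (hhD 0)
    rw [max_eq_left ht]
    rcases le_or_gt t δ with htδ | hδt
    · have : 0 ≤ D * t / δ := by positivity
      linarith [hmono htδ]
    · have : D ≤ D * t / δ := by rw [le_div_iff₀ hδ]; nlinarith
      linarith [hhD t, hh δ]

theorem concaveMajorant_zero (hh : ∀ t, 0 ≤ h t) (hD : 0 ≤ D)
    (hsmall : ∀ ε > 0, ∃ δ > 0, h δ ≤ ε) : concaveMajorant h D 0 = 0 := by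
  refine le_antisymm (le_of_forall_pos_le_add fun ε hε => ?_) (concaveMajorant_nonneg hh hD 0)
  obtain ⟨δ, hδ, hδε⟩ := hsmall ε hε
  have := concaveMajorant_le hh hD 0 hδ
  rw [max_self, mul_zero, zero_div, add_zero] at this
  linarith

theorem mul_concaveMajorant_le (hh : ∀ t, 0 ≤ h t) (hD : 0 ≤ D) {r c : ℝ} (hr : 0 ≤ r)
    (hr1 : r ≤ 1) (hc : 0 ≤ c) : r * concaveMajorant h D c ≤ concaveMajorant h D (r * c) :=
  le_ciInf fun δ => by
    have hδ : (0 : ℝ) < δ := δ.2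
    have := mul_le_mul_of_nonneg_left (concaveMajorant_le hh hD c hδ) hr
    rw [max_eq_left hc] at this
    rw [max_eq_left (mul_nonneg hr hc)]
    have : r * h δ ≤ h δ := mul_le_of_le_one_left (hh δ) hr1
    have : r * (h δ + D * c / δ) = r * h δ + D * (r * c) / δ := by ring
    linarith

theorem concaveMajorant_add_le (hh : ∀ t, 0 ≤ h t) (hD : 0 ≤ D) {s t : ℝ} (hs : 0 ≤ s)
    (ht : 0 ≤ t) :
    concaveMajorant h D (s + t) ≤ concaveMajorant h D s + concaveMajorant h D t := by
  rcases (add_nonneg hs ht).eq_or_lt with hst | hst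
  · obtain rfl : s = 0 := by linarith
    obtain rfl : t = 0 := by linarith
    rw [add_zero]
    exact le_add_of_nonneg_left (concaveMajorant_nonneg hh hD 0)
  have key : ∀ a, 0 ≤ a → a ≤ s + t →
      a / (s + t) * concaveMajorant h D (s + t) ≤ concaveMajorant h D a := fun a ha has => by
    simpa [div_mul_cancel₀ _ hst.ne'] using mul_concaveMajorant_le hh hD
      (div_nonneg ha hst.le) ((div_le_one hst).2 has) hst.le
  have := key s hs (by linarith)
  have := key t ht (by linarith)
  have : s / (s + t) * concaveMajorant h D (s + t) + t / (s + t) * concaveMajorant h D (s + t)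
      = concaveMajorant h D (s + t) := by field_simp
  linarith

theorem abs_sub_concaveMajorant_le (hh : ∀ t, 0 ≤ h t) (hD : 0 ≤ D) {s t : ℝ} (hs : 0 ≤ s)
    (ht : 0 ≤ t) :
    |concaveMajorant h D s - concaveMajorant h D t| ≤ concaveMajorant h D |s - t| := by
  wlog hts : t ≤ s generalizing s t
  · rw [abs_sub_comm, abs_sub_comm s]
    exact this ht hs (le_of_not_ge hts)
  rw [abs_of_nonneg (sub_nonneg.2 hts),
    abs_of_nonneg (sub_nonneg.2 (monotone_concaveMajorant hh hD hts))]
  have := concaveMajorant_add_le hh hD ht (sub_nonneg.2 hts)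
  rw [add_sub_cancel] at this
  linarith

theorem continuousOn_concaveMajorant (hh : ∀ t, 0 ≤ h t) (hD : 0 < D)
    (hsmall : ∀ ε > 0, ∃ δ > 0, h δ ≤ ε) : ContinuousOn (concaveMajorant h D) (Set.Ici 0) := by
  intro t₀ ht₀
  rw [Metric.continuousWithinAt_iff]
  intro ε hε
  obtain ⟨δ, hδ, hδε⟩ := hsmall (ε / 2) (half_pos hε)
  refine ⟨ε * δ / (2 * D), by positivity, fun {t} (ht : 0 ≤ t) hdist => ?_⟩
  rw [Real.dist_eq] at hdist ⊢
  have hle := concaveMajorant_le hh hD.le |t - t₀| hδ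
  rw [max_eq_left (abs_nonneg _)] at hle
  have : D * |t - t₀| / δ < ε / 2 := by
    rw [div_lt_iff₀ hδ]
    calc D * |t - t₀| < D * (ε * δ / (2 * D)) := by gcongr
      _ = ε / 2 * δ := by field_simp
  linarith [abs_sub_concaveMajorant_le hh hD.le ht ht₀]

end ConcaveMajorant

theorem exists_classKInf_ge_of_monotone {h : ℝ → ℝ} {C : ℝ} (hh : ∀ t, 0 ≤ h t)
    (hmono : Monotone h) (hC : ∀ t, h t ≤ C) (hsmall : ∀ ε > 0, ∃ δ > 0, h δ ≤ ε) :
    ∃ σ : ℝ → ℝ, IsClassKInf σ ∧ ∀ t, 0 ≤ t → h t ≤ σ t := by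
  have hD : 0 < C + 1 := by linarith [hh 0, hC 0]
  have hhD : ∀ t, h t ≤ C + 1 := fun t => by linarith [hC t]
  have hm0 := concaveMajorant_nonneg hh hD.le
  refine ⟨fun t => t + concaveMajorant h (C + 1) t, ⟨⟨?_, ?_, ?_, ?_⟩, ?_⟩, ?_⟩
  · exact continuousOn_id.add (continuousOn_concaveMajorant hh hD hsmall)
  · exact fun t _ t' _ htt' =>
      add_lt_add_of_lt_of_le htt' (monotone_concaveMajorant hh hD.le htt'.le)
  · simp [concaveMajorant_zero hh hD.le hsmall]
  · exact fun t ht => add_nonneg ht (hm0 t)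
  · exact Filter.tendsto_atTop_mono (fun t => le_add_of_nonneg_right (hm0 t)) Filter.tendsto_id
  · exact fun t ht => (le_concaveMajorant hh hmono hhD ht).trans (le_add_of_nonneg_left ht)

section Compact

variable {X : Type*} [TopologicalSpace X] {K : Set X} {Θ ρ : X → ℝ}

theorem IsCompact.exists_pos_forall_le_of_vanishing (hK : IsCompact K) (hΘ : ContinuousOn Θ K)
    (hρ : ContinuousOn ρ K) (hρ0 : ∀ p ∈ K, 0 ≤ ρ p) (hvan : ∀ p ∈ K, ρ p = 0 → Θ p = 0)
    {ε : ℝ} (hε : 0 < ε) : ∃ δ > 0, ∀ p ∈ K, ρ p ≤ δ → Θ p ≤ ε := by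
  have hpos : ∀ p ∈ K, 0 < max (ρ p) (ε - Θ p) := fun p hp => by
    rcases (hρ0 p hp).eq_or_lt with h0 | h0
    · simp [hvan p hp h0.symm, hε]
    · exact lt_max_of_lt_left h0
  obtain ⟨δ, hδ, hδle⟩ := hK.exists_forall_le' (hρ.sup (continuousOn_const.sub hΘ)) hpos
  refine ⟨δ / 2, half_pos hδ, fun p hp hρδ => ?_⟩
  have : δ ≤ max (ρ p) (ε - Θ p) := hδle p hp
  rcases le_max_iff.1 this with h | h <;> linarith

theorem exists_classKInf_le_of_isCompact (hK : IsCompact K) (hΘ : ContinuousOn Θ K)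
    (hρ : ContinuousOn ρ K) (hΘ0 : ∀ p ∈ K, 0 ≤ Θ p) (hρ0 : ∀ p ∈ K, 0 ≤ ρ p)
    (hvan : ∀ p ∈ K, ρ p = 0 → Θ p = 0) :
    ∃ σ : ℝ → ℝ, IsClassKInf σ ∧ ∀ p ∈ K, Θ p ≤ σ (ρ p) := by
  set h : ℝ → ℝ := fun t => sSup (Θ '' {p ∈ K | ρ p ≤ t})
  have hbdd : BddAbove (Θ '' K) := (hK.image_of_continuousOn hΘ).bddAbove
  have hbdd' (t : ℝ) : BddAbove (Θ '' {p ∈ K | ρ p ≤ t}) :=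
    hbdd.mono (Set.image_mono (Set.sep_subset _ _))
  have hh (t : ℝ) : 0 ≤ h t := Real.sSup_nonneg <| by
    rintro _ ⟨p, hp, rfl⟩
    exact hΘ0 p hp.1
  have hmono : Monotone h := fun t t' htt' => Real.sSup_le (by
    rintro _ ⟨p, hp, rfl⟩
    exact le_csSup (hbdd' t') ⟨p, ⟨hp.1, hp.2.trans htt'⟩, rfl⟩) (hh t')
  have hC (t : ℝ) : h t ≤ sSup (Θ '' K) := Real.sSup_le (by
    rintro _ ⟨p, hp, rfl⟩
    exact le_csSup hbdd ⟨p, hp.1, rfl⟩)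
    (Real.sSup_nonneg (by rintro _ ⟨p, hp, rfl⟩; exact hΘ0 p hp))
  have hsmall : ∀ ε > 0, ∃ δ > 0, h δ ≤ ε := fun ε hε => by
    obtain ⟨δ, hδ, hδε⟩ := hK.exists_pos_forall_le_of_vanishing hΘ hρ hρ0 hvan hε
    refine ⟨δ, hδ, Real.sSup_le ?_ hε.le⟩
    rintro _ ⟨p, hp, rfl⟩
    exact hδε p hp.1 hp.2
  obtain ⟨σ, hσ, hhσ⟩ := exists_classKInf_ge_of_monotone hh hmono hC hsmall
  exact ⟨σ, hσ, fun p hp =>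
    (le_csSup (hbdd' _) ⟨p, ⟨hp, le_rfl⟩, rfl⟩).trans (hhσ _ (hρ0 p hp))⟩

end Compact

theorem exists_classKInf_norm_sub_le_of_isCompact {E F : Type*} [NormedAddCommGroup E]
    [SeminormedAddCommGroup F] {K : Set E} {φ : E → F} (hK : IsCompact K)
    (hφ : ContinuousOn φ K) :
    ∃ σ : ℝ → ℝ, IsClassKInf σ ∧ ∀ a ∈ K, ∀ b ∈ K, ‖φ a - φ b‖ ≤ σ ‖a - b‖ := by
  obtain ⟨σ, hσ, hle⟩ := exists_classKInf_le_of_isCompact (hK.prod hK)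
    (Θ := fun q : E × E => ‖φ q.1 - φ q.2‖) (ρ := fun q => ‖q.1 - q.2‖)
    ((hφ.comp continuousOn_fst fun _ hq => hq.1).sub
      (hφ.comp continuousOn_snd fun _ hq => hq.2)).norm
    (by fun_prop) (fun _ _ => norm_nonneg _) (fun _ _ => norm_nonneg _)
    (fun q _ hq => by simp [norm_sub_eq_zero_iff.1 hq])
  exact ⟨σ, hσ, fun a ha b hb => hle (a, b) ⟨ha, hb⟩⟩

theorem exists_classKInf_norm_image_sub_le {P E G : Type*} [TopologicalSpace P]
    [NormedAddCommGroup E] [NormedSpace ℝ E] [NormedAddCommGroup G] [NormedSpace ℝ G]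
    {ψ : P → E → G} {ψ' : P → E → E →L[ℝ] G} {Pc : Set P} {s : Set E} {ρ : P → ℝ}
    (hPc : IsCompact Pc) (hs : IsCompact s) (hsc : Convex ℝ s)
    (hψ : ∀ p ∈ Pc, ∀ z ∈ s, HasFDerivWithinAt (ψ p) (ψ' p z) s z)
    (hψ' : ContinuousOn (fun q : P × E => ψ' q.1 q.2) (Pc ×ˢ s))
    (hρ : ContinuousOn ρ Pc) (hρ0 : ∀ p ∈ Pc, 0 ≤ ρ p)
    (hvan : ∀ p ∈ Pc, ρ p = 0 → ∀ z ∈ s, ψ' p z = 0) :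
    ∃ σ : ℝ → ℝ, IsClassKInf σ ∧
      ∀ p ∈ Pc, ∀ z₁ ∈ s, ∀ z₂ ∈ s, ‖ψ p z₁ - ψ p z₂‖ ≤ σ (ρ p) * ‖z₁ - z₂‖ := by
  obtain ⟨σ, hσ, hle⟩ := exists_classKInf_le_of_isCompact (hPc.prod hs) hψ'.norm
    (hρ.comp continuousOn_fst fun _ hq => hq.1) (fun _ _ => norm_nonneg _)
    (fun q hq => hρ0 q.1 hq.1) (fun q hq hq0 => by simp [hvan q.1 hq.1 hq0 q.2 hq.2])
  exact ⟨σ, hσ, fun p hp z₁ hz₁ z₂ hz₂ => hsc.norm_image_sub_le_of_norm_hasFDerivWithin_le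
    (hψ p hp) (fun z hz => hle (p, z) ⟨hp, hz⟩) hz₂ hz₁⟩

section MismatchDefect

variable {E D W G : Type*}

/-- The nominal mismatch `FP z 0 - F z 0` is subtracted because nominal consistency holds only on
`𝕏 × 𝕌`, which need not be open, so its `z`-derivative need not vanish. -/
def mismatchDefect [Add E] [Zero D] [Zero W] [Sub G] (F : E → D → G) (FP : E → W → G)
    (p : E × D × W) (z : E) : G :=
  FP (z + p.1) p.2.2 - FP z 0 - (F z p.2.1 - F z 0)

theorem mismatchDefect_of_eq [Add E] [Zero D] [Zero W] [AddCommGroup G] {F : E → D → G}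
    {FP : E → W → G} (p : E × D × W) {z : E} (hz : FP z 0 = F z 0) :
    mismatchDefect F FP p z = FP (z + p.1) p.2.2 - F z p.2.1 := by
  rw [mismatchDefect, hz]
  abel

theorem exists_classKInf_norm_mismatchDefect_sub_le [NormedAddCommGroup E] [NormedSpace ℝ E]
    [TopologicalSpace D] [Zero D] [NormedAddCommGroup W] [NormedAddCommGroup G] [NormedSpace ℝ G]
    {F : E → D → G} {FP : E → W → G}
    {F' : E → D → E →L[ℝ] G} {FP' : E → W → E →L[ℝ] G} {Ws : Set W} {s : Set E}
    {Pc : Set (E × D × W)}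
    (hF : ∀ z d, HasFDerivAt (F · d) (F' z d) z) (hF' : Continuous fun q : E × D => F' q.1 q.2)
    (hFP : ∀ w ∈ Ws, ∀ z, HasFDerivAt (FP · w) (FP' z w) z)
    (hFP' : Continuous fun q : E × W => FP' q.1 q.2) (hWs0 : 0 ∈ Ws)
    (hs : IsCompact s) (hsc : Convex ℝ s) (hPc : IsCompact Pc) (hPcW : ∀ p ∈ Pc, p.2.2 ∈ Ws)
    (hPc0 : ∀ p ∈ Pc, p.2.2 = 0 → p = 0) :
    ∃ σ : ℝ → ℝ, IsClassKInf σ ∧ ∀ p ∈ Pc, ∀ z₁ ∈ s, ∀ z₂ ∈ s,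
      ‖mismatchDefect F FP p z₁ - mismatchDefect F FP p z₂‖ ≤ σ ‖p.2.2‖ * ‖z₁ - z₂‖ := by
  refine exists_classKInf_norm_image_sub_le hPc hs hsc
    (ψ' := fun p z => FP' (z + p.1) p.2.2 - FP' z 0 - (F' z p.2.1 - F' z 0))
    (fun p hp z _ => ?_) (Continuous.continuousOn ?_) (by fun_prop) (fun _ _ => norm_nonneg _)
    (fun p hp hp0 z _ => by simp [hPc0 p hp (norm_eq_zero.1 hp0)])
  · exact ((((hasFDerivAt_comp_add_right p.1).2 (hFP _ (hPcW p hp) _)).sub (hFP 0 hWs0 z)).sub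
      ((hF z p.2.1).sub (hF z 0))).hasFDerivWithinAt
  · have h₁ := hFP'.comp (by fun_prop : Continuous fun q : (E × D × W) × E =>
      (q.2 + q.1.1, q.1.2.2))
    have h₂ := hFP'.comp (by fun_prop : Continuous fun q : (E × D × W) × E => (q.2, (0 : W)))
    have h₃ := hF'.comp (by fun_prop : Continuous fun q : (E × D × W) × E => (q.2, q.1.2.1))
    have h₄ := hF'.comp (by fun_prop : Continuous fun q : (E × D × W) × E => (q.2, (0 : D)))
    exact (h₁.sub h₂).sub (h₃.sub h₄)

end MismatchDefect

section StateOutputMap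

variable {X U D W Y : Type*}

def stateOutputMap {V : Type*} (f : X → U → V → X) (h : X → U → V → Y) (z : X × U) (v : V) :
    X × Y :=
  (f z.1 z.2 v, h z.1 z.2 v)

variable [NormedAddCommGroup X] [NormedSpace ℝ X] [NormedAddCommGroup U] [NormedSpace ℝ U]
  [NormedAddCommGroup D] [NormedSpace ℝ D] [NormedAddCommGroup W]
  [NormedAddCommGroup Y] [NormedSpace ℝ Y]

theorem ContDiff.hasFDerivAt_fderiv_partial {E G : Type*} [NormedAddCommGroup E]
    [NormedSpace ℝ E] [NormedAddCommGroup G] [NormedSpace ℝ G] {F : E → D → G}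
    (hF : ContDiff ℝ 1 (Function.uncurry F)) (z : E) (d : D) :
    HasFDerivAt (F · d) (fderiv ℝ (F · d) z) z :=
  ((hF.comp (contDiff_id.prodMk contDiff_const)).differentiable one_ne_zero z).hasFDerivAt

theorem ContDiff.continuous_fderiv_partial {E G : Type*} [NormedAddCommGroup E]
    [NormedSpace ℝ E] [NormedAddCommGroup G] [NormedSpace ℝ G] {F : E → D → G}
    (hF : ContDiff ℝ 1 (Function.uncurry F)) :
    Continuous fun q : E × D => fderiv ℝ (F · q.2) q.1 :=
  (ContDiff.fderiv (f := fun q z => F z q.2) (n := 0) (hF.comp (contDiff_snd.prodMk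
    (contDiff_snd.comp contDiff_fst))) contDiff_fst (by norm_num)).continuous

theorem contDiff_uncurry_stateOutputMap {f : X → U → D → X} {h : X → U → D → Y} {k : WithTop ℕ∞}
    (hf : ContDiff ℝ k fun p : X × U × D => f p.1 p.2.1 p.2.2)
    (hh : ContDiff ℝ k fun p : X × U × D => h p.1 p.2.1 p.2.2) :
    ContDiff ℝ k (Function.uncurry (stateOutputMap f h)) := by
  have hL : ContDiff ℝ k fun q : (X × U) × D => (q.1.1, q.1.2, q.2) := by fun_prop
  exact (hf.comp hL).prodMk (hh.comp hL)

theorem exists_classKInf_norm_mismatchDefect_stateOutputMap_sub_le {f : X → U → D → X}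
    {h : X → U → D → Y} {fP : X → U → W → X} {hP : X → U → W → Y} {Ws : Set W}
    {s : Set (X × U)} {Pc : Set ((X × U) × D × W)}
    (hf : ContDiff ℝ 1 fun p : X × U × D => f p.1 p.2.1 p.2.2)
    (hh : ContDiff ℝ 1 fun p : X × U × D => h p.1 p.2.1 p.2.2)
    (hfP : ∀ w ∈ Ws, ContDiff ℝ 1 fun z : X × U => fP z.1 z.2 w)
    (hhP : ∀ w ∈ Ws, ContDiff ℝ 1 fun z : X × U => hP z.1 z.2 w)
    (hfP' : Continuous fun q : (X × U) × W => fderiv ℝ (fun z : X × U => fP z.1 z.2 q.2) q.1)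
    (hhP' : Continuous fun q : (X × U) × W => fderiv ℝ (fun z : X × U => hP z.1 z.2 q.2) q.1)
    (hWs0 : 0 ∈ Ws) (hs : IsCompact s) (hsc : Convex ℝ s) (hPc : IsCompact Pc)
    (hPcW : ∀ p ∈ Pc, p.2.2 ∈ Ws) (hPc0 : ∀ p ∈ Pc, p.2.2 = 0 → p = 0) :
    ∃ σ : ℝ → ℝ, IsClassKInf σ ∧ ∀ p ∈ Pc, ∀ z₁ ∈ s, ∀ z₂ ∈ s,
      ‖mismatchDefect (stateOutputMap f h) (stateOutputMap fP hP) p z₁ -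
        mismatchDefect (stateOutputMap f h) (stateOutputMap fP hP) p z₂‖ ≤
        σ ‖p.2.2‖ * ‖z₁ - z₂‖ := by
  have hF := contDiff_uncurry_stateOutputMap hf hh
  exact exists_classKInf_norm_mismatchDefect_sub_le hF.hasFDerivAt_fderiv_partial
    hF.continuous_fderiv_partial
    (FP' := fun z w => (fderiv ℝ (fun z : X × U => fP z.1 z.2 w) z).prod
      (fderiv ℝ (fun z : X × U => hP z.1 z.2 w) z))
    (fun w hw z => ((hfP w hw).differentiable one_ne_zero z).hasFDerivAt.prodMk
      ((hhP w hw).differentiable one_ne_zero z).hasFDerivAt)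
    ((ContinuousLinearMap.prodₗᵢ ℝ).continuous.comp (hfP'.prodMk hhP'))
    hWs0 hs hsc hPc hPcW hPc0

end StateOutputMap

theorem norm_prod_add_le {A B C : Type*} [SeminormedAddCommGroup A] [SeminormedAddCommGroup B]
    [SeminormedAddCommGroup C] (a b : A) (c : B) (e : C) :
    ‖(a + b, c, e)‖ ≤ ‖(a, e)‖ + ‖(b, c)‖ := by
  simp only [Prod.norm_def]
  refine max_le ((norm_add_le a b).trans (add_le_add (le_max_left _ _) (le_max_left _ _)))
    (max_le ?_ ?_)
  · linarith [le_max_right ‖b‖ ‖c‖, le_max_left ‖a‖ ‖e‖, norm_nonneg a]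
  · linarith [le_max_right ‖a‖ ‖e‖, le_max_left ‖b‖ ‖c‖, norm_nonneg b]

namespace SSTPData

variable {n nu ny nd nr nc nw : ℕ} (S : SSTPData n nu ny nd nr nc)

theorem subset_Bhat {Bc : Set (Param nu ny nd nr)} {δ0 : ℝ} (hBc : Bc ⊆ S.B) (hδ0 : 0 ≤ δ0) :
    Bc ⊆ S.Bhat Bc δ0 :=
  fun β hβ => ⟨(hBc hβ).2.1, β.2.2.2, hβ, by simpa using hδ0⟩

/-- `(xP, d)` solves the mismatch-correction equations at `α = (s_sp, w_P)`, with
`β = (s_sp, d)`. -/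
def IsCorrection (xs : Param nu ny nd nr → Vec n) (us : Param nu ny nd nr → Vec nu)
    (fP : Vec n → Vec nu → Vec nw → Vec n) (hP : Vec n → Vec nu → Vec nw → Vec ny)
    (α : Vec nr × Vec nu × Vec ny × Vec nw) (xP : Vec n) (d : Vec nd) : Prop :=
  xP = fP xP (us (α.1, α.2.1, α.2.2.1, d)) α.2.2.2 ∧
    S.h (xs (α.1, α.2.1, α.2.2.1, d)) (us (α.1, α.2.1, α.2.2.1, d)) d =
      hP xP (us (α.1, α.2.1, α.2.2.1, d)) α.2.2.2

variable {xs : Param nu ny nd nr → Vec n} {us : Param nu ny nd nr → Vec nu}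
  {fP : Vec n → Vec nu → Vec nw → Vec n} {hP : Vec n → Vec nu → Vec nw → Vec ny}
  {α : Vec nr × Vec nu × Vec ny × Vec nw}

theorem stateOutputMap_zero_eq (hconsf : ∀ x ∈ S.X, ∀ u ∈ S.U, S.f x u 0 = fP x u 0)
    (hconsh : ∀ x ∈ S.X, ∀ u ∈ S.U, S.h x u 0 = hP x u 0) {x : Vec n} {u : Vec nu}
    (hx : x ∈ S.X) (hu : u ∈ S.U) :
    stateOutputMap fP hP (x, u) 0 = stateOutputMap S.f S.h (x, u) 0 := by
  simp [stateOutputMap, hconsf x hx u hu, hconsh x hx u hu]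

theorem isCorrection_target_zero (hzs_mem : ∀ β ∈ S.B, (xs β, us β) ∈ S.ZO β.1 β.2.2.2)
    (hconsf : ∀ x ∈ S.X, ∀ u ∈ S.U, S.f x u 0 = fP x u 0)
    (hconsh : ∀ x ∈ S.X, ∀ u ∈ S.U, S.h x u 0 = hP x u 0) (hα0 : α.2.2.2 = 0)
    (hB : (α.1, α.2.1, α.2.2.1, (0 : Vec nd)) ∈ S.B) :
    S.IsCorrection xs us fP hP α (xs (α.1, α.2.1, α.2.2.1, 0)) 0 := by
  obtain ⟨hx, hu, hsteady, -⟩ := hzs_mem _ hB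
  rw [IsCorrection, hα0, ← hconsf _ hx _ hu, ← hconsh _ hx _ hu]
  exact ⟨hsteady, rfl⟩

theorem mem_B_zero_of_isCorrection (hD0 : (0 : Vec nd) ∈ S.D)
    (hzs_mem : ∀ β ∈ S.B, (xs β, us β) ∈ S.ZO β.1 β.2.2.2)
    (hconsf : ∀ x ∈ S.X, ∀ u ∈ S.U, S.f x u 0 = fP x u 0)
    (hconsh : ∀ x ∈ S.X, ∀ u ∈ S.U, S.h x u 0 = hP x u 0) (hα0 : α.2.2.2 = 0)
    (hαZ : (α.2.1, α.2.2.1) ∈ S.Zbar) {xP : Vec n} {d : Vec nd} (hxP : xP ∈ S.X)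
    (hB : (α.1, α.2.1, α.2.2.1, d) ∈ S.B) (hcorr : S.IsCorrection xs us fP hP α xP d) :
    (α.1, α.2.1, α.2.2.1, (0 : Vec nd)) ∈ S.B := by
  obtain ⟨-, hu, -, hZ, hr⟩ := hzs_mem _ hB
  obtain ⟨hxP_eq, hy⟩ := hcorr
  rw [hα0] at hxP_eq hy
  have hy' : S.h xP (us (α.1, α.2.1, α.2.2.1, d)) 0 =
      S.h (xs (α.1, α.2.1, α.2.2.1, d)) (us (α.1, α.2.1, α.2.2.1, d)) d := by
    rw [hconsh _ hxP _ hu, hy]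
  refine ⟨hαZ, hD0, (xP, us (α.1, α.2.1, α.2.2.1, d)), hxP, hu, ?_, ?_, ?_⟩
  · rwa [hconsf _ hxP _ hu]
  · simpa only [hy'] using hZ
  · simpa only [hy'] using hr

/-- At `w_P = 0` nominal consistency makes the nominal target `z_s(s_sp, 0)` a correction, so it is
the correction by uniqueness. -/
theorem eq_target_of_isCorrection_of_dist_eq_zero (hD0 : (0 : Vec nd) ∈ S.D)
    (hzs_mem : ∀ β ∈ S.B, (xs β, us β) ∈ S.ZO β.1 β.2.2.2)
    (hconsf : ∀ x ∈ S.X, ∀ u ∈ S.U, S.f x u 0 = fP x u 0)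
    (hconsh : ∀ x ∈ S.X, ∀ u ∈ S.U, S.h x u 0 = hP x u 0) (hα0 : α.2.2.2 = 0)
    (hαZ : (α.2.1, α.2.2.1) ∈ S.Zbar) {xP : Vec n} {d : Vec nd} (hxP : xP ∈ S.X)
    (hB : (α.1, α.2.1, α.2.2.1, d) ∈ S.B) (hcorr : S.IsCorrection xs us fP hP α xP d)
    (huniq : ∀ xP' d', xP' ∈ S.X → d' ∈ S.D → S.IsCorrection xs us fP hP α xP' d' →
      xP' = xP ∧ d' = d) :
    d = 0 ∧ xP = xs (α.1, α.2.1, α.2.2.1, d) := by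
  have hB0 := S.mem_B_zero_of_isCorrection hD0 hzs_mem hconsf hconsh hα0 hαZ hxP hB hcorr
  obtain ⟨hx, hd⟩ := huniq _ 0 (hzs_mem _ hB0).1 hD0
    (S.isCorrection_target_zero hzs_mem hconsf hconsh hα0 hB0)
  subst hd
  exact ⟨rfl, hx.symm⟩

theorem mismatchDefect_at_target (hzs_mem : ∀ β ∈ S.B, (xs β, us β) ∈ S.ZO β.1 β.2.2.2)
    (hconsf : ∀ x ∈ S.X, ∀ u ∈ S.U, S.f x u 0 = fP x u 0)
    (hconsh : ∀ x ∈ S.X, ∀ u ∈ S.U, S.h x u 0 = hP x u 0) {xP : Vec n} {d : Vec nd}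
    (hB : (α.1, α.2.1, α.2.2.1, d) ∈ S.B) (hcorr : S.IsCorrection xs us fP hP α xP d) :
    mismatchDefect (stateOutputMap S.f S.h) (stateOutputMap fP hP)
      ((xP - xs (α.1, α.2.1, α.2.2.1, d), 0), d, α.2.2.2)
      (xs (α.1, α.2.1, α.2.2.1, d), us (α.1, α.2.1, α.2.2.1, d)) =
      (xP - xs (α.1, α.2.1, α.2.2.1, d), 0) := by
  obtain ⟨hx, hu, hsteady, -⟩ := hzs_mem _ hB
  rw [mismatchDefect_of_eq _ (S.stateOutputMap_zero_eq hconsf hconsh hx hu)]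
  simp only [stateOutputMap, Prod.mk_add_mk, add_sub_cancel, add_zero, ← hcorr.1, ← hcorr.2,
    ← hsteady, Prod.mk_sub_mk, sub_self]

end SSTPData

theorem mismatch_noise_bound_general
    {n nu ny nd nr nc nw : ℕ} (S : SSTPData n nu ny nd nr nc)
    (hS : SSTPAssumptions S)
    -- SSTP selection
    (xs : Param nu ny nd nr → Vec n) (us : Param nu ny nd nr → Vec nu)
    (hzs_mem : ∀ β ∈ S.B, (xs β, us β) ∈ S.ZO β.1 β.2.2.2)
    -- the plant and nominal consistency
    (fP : Vec n → Vec nu → Vec nw → Vec n)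
    (hP : Vec n → Vec nu → Vec nw → Vec ny)
    (W : Set (Vec nw)) (hW0 : (0 : Vec nw) ∈ W)
    (hconsf : ∀ x ∈ S.X, ∀ u ∈ S.U, S.f x u 0 = fP x u 0)
    (hconsh : ∀ x ∈ S.X, ∀ u ∈ S.U, S.h x u 0 = hP x u 0)
    -- differentiability
    (hf1 : ContDiff ℝ 1 fun p : Vec n × Vec nu × Vec nd => S.f p.1 p.2.1 p.2.2)
    (hh1 : ContDiff ℝ 1 fun p : Vec n × Vec nu × Vec nd => S.h p.1 p.2.1 p.2.2)
    (hfP1 : ∀ wP ∈ W, ContDiff ℝ 1 fun z : Vec n × Vec nu => fP z.1 z.2 wP)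
    (hhP1 : ∀ wP ∈ W, ContDiff ℝ 1 fun z : Vec n × Vec nu => hP z.1 z.2 wP)
    (hfP1c : Continuous fun p : (Vec n × Vec nu) × Vec nw =>
      fderiv ℝ (fun z : Vec n × Vec nu => fP z.1 z.2 p.2) p.1)
    (hhP1c : Continuous fun p : (Vec n × Vec nu) × Vec nw =>
      fderiv ℝ (fun z : Vec n × Vec nu => hP z.1 z.2 p.2) p.1)
    -- mismatch corrections
    (Ac : Set (Vec nr × Vec nu × Vec ny × Vec nw)) (Bc : Set (Param nu ny nd nr))
    (hAc_cp : IsCompact Ac)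
    (hAc_sub : Ac ⊆ {α | (α.2.1, α.2.2.1) ∈ S.Zbar ∧ α.2.2.2 ∈ W})
    (hBc_cp : IsCompact Bc) (hBc_sub : Bc ⊆ S.B)
    (xPs : Vec nr × Vec nu × Vec ny × Vec nw → Vec n)
    (ds : Vec nr × Vec nu × Vec ny × Vec nw → Vec nd)
    (hxds_cont : ContinuousOn (fun α => (xPs α, ds α)) Ac)
    (hxds_mem : ∀ α ∈ Ac, xPs α ∈ S.X ∧ ds α ∈ S.D)
    (δ0 : ℝ) (hδ0 : 0 < δ0)
    (hzs_lip : ∃ K : NNReal, LipschitzOnWith K (fun β => (xs β, us β)) (S.Bhat Bc δ0))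
    (hmatch : ∀ α ∈ Ac,
      xPs α = fP (xPs α) (us (α.1, α.2.1, α.2.2.1, ds α)) α.2.2.2 ∧
      S.h (xs (α.1, α.2.1, α.2.2.1, ds α)) (us (α.1, α.2.1, α.2.2.1, ds α)) (ds α) =
        hP (xPs α) (us (α.1, α.2.1, α.2.2.1, ds α)) α.2.2.2)
    (hmatch_unique : ∀ α ∈ Ac, ∀ (xP' : Vec n) (d' : Vec nd), xP' ∈ S.X → d' ∈ S.D →
      xP' = fP xP' (us (α.1, α.2.1, α.2.2.1, d')) α.2.2.2 →
      S.h (xs (α.1, α.2.1, α.2.2.1, d')) (us (α.1, α.2.1, α.2.2.1, d')) d' =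
        hP xP' (us (α.1, α.2.1, α.2.2.1, d')) α.2.2.2 →
      xP' = xPs α ∧ d' = ds α)
    (hdsBc : ∀ α ∈ Ac, (α.1, α.2.1, α.2.2.1, ds α) ∈ Bc) :
    ∀ Xc : Set (Vec n), IsCompact Xc → Xc ⊆ S.X →
      ∃ σw σα : ℝ → ℝ, IsClassKInf σw ∧ IsClassKInf σα ∧
        ∀ x ∈ Xc, ∀ u ∈ S.U, ∀ α ∈ Ac, ∀ αp ∈ Ac,
          ‖((fP (x + (xPs α - xs (α.1, α.2.1, α.2.2.1, ds α))) u α.2.2.2 -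
              S.f x u (ds α) - (xPs αp - xs (αp.1, αp.2.1, αp.2.2.1, ds αp)),
            ds αp - ds α,
            hP (x + (xPs α - xs (α.1, α.2.1, α.2.2.1, ds α))) u α.2.2.2 -
              S.h x u (ds α)) : Vec n × Vec nd × Vec ny)‖ ≤
          σw ‖α.2.2.2‖ * ‖((x, u) : Vec n × Vec nu) -
            (xs (α.1, α.2.1, α.2.2.1, ds α), us (α.1, α.2.1, α.2.2.1, ds α))‖ +
          σα ‖αp - α‖ := by
  intro Xc hXc hXcX
  obtain ⟨K, hK⟩ := hzs_lip
  have hzs := hK.continuousOn.mono (S.subset_Bhat hBc_sub hδ0.le)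
  have hds : ContinuousOn ds Ac := hxds_cont.snd
  set Δ := fun α : Vec nr × Vec nu × Vec ny × Vec nw => xPs α - xs (α.1, α.2.1, α.2.2.1, ds α)
  have hΔ : ContinuousOn Δ Ac := hxds_cont.fst.sub (hzs.comp (by fun_prop) hdsBc).fst
  have hcorr0 (α) (hα : α ∈ Ac) (hα0 : α.2.2.2 = 0) :
      ds α = 0 ∧ xPs α = xs (α.1, α.2.1, α.2.2.1, ds α) :=
    S.eq_target_of_isCorrection_of_dist_eq_zero hS.hD0 hzs_mem hconsf hconsh hα0 (hAc_sub hα).1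
      (hxds_mem α hα).1 (hBc_sub (hdsBc α hα)) (hmatch α hα)
      fun xP' d' hx hd h => hmatch_unique α hα xP' d' hx hd h.1 h.2
  obtain ⟨R, hR⟩ := ((hXc.prod hS.hUcp).union
    (hBc_cp.image_of_continuousOn hzs)).isBounded.subset_closedBall 0
  obtain ⟨σw, hσw, hσw_le⟩ := exists_classKInf_norm_mismatchDefect_stateOutputMap_sub_le
    (Pc := (fun α => ((Δ α, (0 : Vec nu)), ds α, α.2.2.2)) '' Ac) hf1 hh1 hfP1 hhP1 hfP1c hhP1c
    hW0 (isCompact_closedBall _ _) (convex_closedBall _ _)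
    (hAc_cp.image_of_continuousOn (by fun_prop)) (by rintro _ ⟨α, hα, rfl⟩; exact (hAc_sub hα).2)
    (by rintro _ ⟨α, hα, rfl⟩ (hα0 : α.2.2.2 = 0); simp [Δ, hcorr0 α hα hα0, hα0])
  obtain ⟨σα, hσα, hσα_le⟩ := exists_classKInf_norm_sub_le_of_isCompact hAc_cp
    (φ := fun α => (-Δ α, ds α)) (hΔ.neg.prodMk hds)
  refine ⟨σw, σα, hσw, hσα, fun x hx u hu α hα αp hαp => ?_⟩
  have hA := hσw_le _ ⟨α, hα, rfl⟩ (x, u) (hR (Or.inl ⟨hx, hu⟩)) _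
    (hR (Or.inr ⟨_, hdsBc α hα, rfl⟩))
  rw [mismatchDefect_of_eq _ (S.stateOutputMap_zero_eq hconsf hconsh (hXcX hx) hu),
    S.mismatchDefect_at_target hzs_mem hconsf hconsh (hBc_sub (hdsBc α hα)) (hmatch α hα)] at hA
  have hB := hσα_le αp hαp α hα
  refine (le_of_eq_of_le ?_ (norm_prod_add_le _ _ _ _)).trans (add_le_add hA hB)
  simp only [stateOutputMap, Δ, Prod.mk_add_mk, add_zero, Prod.mk_sub_mk, neg_sub_neg,
    sub_zero]
  congr 2
  abel

/-- **Proposition 8: bound on the mismatch-induced estimator noise.** -/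
theorem mismatch_noise_bound
    {n nu ny nd nr nc nw : ℕ} (S : SSTPData n nu ny nd nr nc)
    (hS : SSTPAssumptions S)
    -- SSTP selection
    (xs : Param nu ny nd nr → Vec n) (us : Param nu ny nd nr → Vec nu)
    (hzs_mem : ∀ β ∈ S.B, (xs β, us β) ∈ S.ZO β.1 β.2.2.2)
    (hzs_opt : ∀ β ∈ S.B, ∀ z ∈ S.ZO β.1 β.2.2.2, S.Vs β (xs β, us β) ≤ S.Vs β z)
    -- the plant and nominal consistency
    (fP : Vec n → Vec nu → Vec nw → Vec n)
    (hP : Vec n → Vec nu → Vec nw → Vec ny)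
    (W : Set (Vec nw)) (hWcp : IsCompact W) (hW0 : (0 : Vec nw) ∈ W)
    (hfP : Continuous fun p : Vec n × Vec nu × Vec nw => fP p.1 p.2.1 p.2.2)
    (hhP : Continuous fun p : Vec n × Vec nu × Vec nw => hP p.1 p.2.1 p.2.2)
    (hconsf : ∀ x ∈ S.X, ∀ u ∈ S.U, S.f x u 0 = fP x u 0)
    (hconsh : ∀ x ∈ S.X, ∀ u ∈ S.U, S.h x u 0 = hP x u 0)
    -- differentiability
    (hg1 : ContDiff ℝ 1 fun p : Vec nu × Vec ny => S.g p.1 p.2)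
    (hf1 : ContDiff ℝ 1 fun p : Vec n × Vec nu × Vec nd => S.f p.1 p.2.1 p.2.2)
    (hh1 : ContDiff ℝ 1 fun p : Vec n × Vec nu × Vec nd => S.h p.1 p.2.1 p.2.2)
    (hfP1 : ∀ wP ∈ W, ContDiff ℝ 1 fun z : Vec n × Vec nu => fP z.1 z.2 wP)
    (hhP1 : ∀ wP ∈ W, ContDiff ℝ 1 fun z : Vec n × Vec nu => hP z.1 z.2 wP)
    (hfP1c : Continuous fun p : (Vec n × Vec nu) × Vec nw =>
      fderiv ℝ (fun z : Vec n × Vec nu => fP z.1 z.2 p.2) p.1)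
    (hhP1c : Continuous fun p : (Vec n × Vec nu) × Vec nw =>
      fderiv ℝ (fun z : Vec n × Vec nu => hP z.1 z.2 p.2) p.1)
    -- mismatch corrections
    (Ac : Set (Vec nr × Vec nu × Vec ny × Vec nw)) (Bc : Set (Param nu ny nd nr))
    (hAc_cp : IsCompact Ac)
    (hAc_sub : Ac ⊆ {α | (α.2.1, α.2.2.1) ∈ S.Zbar ∧ α.2.2.2 ∈ W})
    (hAc0 : (0 : Vec nr × Vec nu × Vec ny × Vec nw) ∈ Ac)
    (hBc_cp : IsCompact Bc) (hBc_sub : Bc ⊆ S.B)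
    (hBc0 : (0 : Param nu ny nd nr) ∈ Bc)
    (xPs : Vec nr × Vec nu × Vec ny × Vec nw → Vec n)
    (ds : Vec nr × Vec nu × Vec ny × Vec nw → Vec nd)
    (hxds_cont : ContinuousOn (fun α => (xPs α, ds α)) Ac)
    (hxds_mem : ∀ α ∈ Ac, xPs α ∈ S.X ∧ ds α ∈ S.D)
    (δ0 : ℝ) (hδ0 : 0 < δ0)
    (hBhat_sub : S.Bhat Bc δ0 ⊆ S.B)
    (hzs_lip : ∃ K : NNReal, LipschitzOnWith K (fun β => (xs β, us β)) (S.Bhat Bc δ0))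
    (hmatch : ∀ α ∈ Ac,
      xPs α = fP (xPs α) (us (α.1, α.2.1, α.2.2.1, ds α)) α.2.2.2 ∧
      S.h (xs (α.1, α.2.1, α.2.2.1, ds α)) (us (α.1, α.2.1, α.2.2.1, ds α)) (ds α) =
        hP (xPs α) (us (α.1, α.2.1, α.2.2.1, ds α)) α.2.2.2)
    (hmatch_unique : ∀ α ∈ Ac, ∀ (xP' : Vec n) (d' : Vec nd), xP' ∈ S.X → d' ∈ S.D →
      xP' = fP xP' (us (α.1, α.2.1, α.2.2.1, d')) α.2.2.2 →
      S.h (xs (α.1, α.2.1, α.2.2.1, d')) (us (α.1, α.2.1, α.2.2.1, d')) d' =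
        hP xP' (us (α.1, α.2.1, α.2.2.1, d')) α.2.2.2 →
      xP' = xPs α ∧ d' = ds α)
    (hdsBc : ∀ α ∈ Ac, (α.1, α.2.1, α.2.2.1, ds α) ∈ Bc)
    (hAc_zero : ∀ α ∈ Ac, ((α.1, α.2.1, α.2.2.1, (0 : Vec nw))) ∈ Ac) :
    ∀ Xc : Set (Vec n), IsCompact Xc → Xc ⊆ S.X →
      ∃ σw σα : ℝ → ℝ, IsClassKInf σw ∧ IsClassKInf σα ∧
        ∀ x ∈ Xc, ∀ u ∈ S.U, ∀ α ∈ Ac, ∀ αp ∈ Ac,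
          ‖((fP (x + (xPs α - xs (α.1, α.2.1, α.2.2.1, ds α))) u α.2.2.2 -
              S.f x u (ds α) - (xPs αp - xs (αp.1, αp.2.1, αp.2.2.1, ds αp)),
            ds αp - ds α,
            hP (x + (xPs α - xs (α.1, α.2.1, α.2.2.1, ds α))) u α.2.2.2 -
              S.h x u (ds α)) : Vec n × Vec nd × Vec ny)‖ ≤
          σw ‖α.2.2.2‖ * ‖((x, u) : Vec n × Vec nu) -
            (xs (α.1, α.2.1, α.2.2.1, ds α), us (α.1, α.2.1, α.2.2.1, ds α))‖ +
          σα ‖αp - α‖ :=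
  mismatch_noise_bound_general S hS xs us hzs_mem fP hP W hW0 hconsf hconsh hf1 hh1 hfP1 hhP1 hfP1c
    hhP1c Ac Bc hAc_cp hAc_sub hBc_cp hBc_sub xPs ds hxds_cont hxds_mem δ0 hδ0 hzs_lip hmatch
    hmatch_unique hdsBc
end
end

section
/- (Sublevel-set invariance lemma from the proof of the ISS Lyapunov theorem.) Let α4 be of class 𝒦∞ with id − α4 of class 𝒦 (where id(t) = t), and let ρ be of class 𝒦∞ with id − ρ of class 𝒦∞. Let b ≥ 0 and set s := ρ(α4(b)). Suppose v : ℕ → [0,∞) satisfies v(k+1) ≤ v(k) − α4(v(k)) + s for all k ∈ ℕ. If v(k0) ≤ b for some k0 ∈ ℕ, then v(k) ≤ b for all k ≥ k0. -/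
noncomputable section

/-! Since `id - α4` is increasing, one step of the recursion maps `[0, b]` into
`[0, b - α4 b + ρ (α4 b)]`, and `ρ ≤ id` makes this bound at most `b`. -/

theorem IsClassK.nonneg_s18 {φ : ℝ → ℝ} (hφ : IsClassK φ) {t : ℝ} (ht : 0 ≤ t) : 0 ≤ φ t :=
  hφ.2.2.2 t ht

theorem IsClassK.le_self_of_id_sub {φ : ℝ → ℝ} (hφ : IsClassK fun t => t - φ t) {t : ℝ}
    (ht : 0 ≤ t) : φ t ≤ t :=
  sub_nonneg.mp (hφ.nonneg_s18 ht)

theorem sub_add_le_of_monotoneOn_id_sub {α : ℝ → ℝ}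
    (hα : MonotoneOn (fun t => t - α t) (Set.Ici 0)) {t b s : ℝ} (ht : 0 ≤ t) (htb : t ≤ b)
    (hs : s ≤ α b) : t - α t + s ≤ b := by
  have hstep : t - α t ≤ b - α b := hα ht (ht.trans htb) htb
  linarith

theorem sublevel_invariance_general
    (α4 ρ : ℝ → ℝ)
    (hα4 : IsClassKInf α4) (hid4 : IsClassK fun t => t - α4 t)
    (hidρ : IsClassKInf fun t => t - ρ t)
    (b : ℝ) (hb : 0 ≤ b)
    (v : ℕ → ℝ) (hvnn : ∀ k, 0 ≤ v k)
    (hdec : ∀ k, v (k + 1) ≤ v k - α4 (v k) + ρ (α4 b))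
    (k0 : ℕ) (hk0 : v k0 ≤ b) :
    ∀ k, k0 ≤ k → v k ≤ b := by
  have hρ_le : ρ (α4 b) ≤ α4 b := hidρ.1.le_self_of_id_sub (hα4.1.nonneg_s18 hb)
  intro k hk
  induction k, hk using Nat.le_induction with
  | base => exact hk0
  | succ n _ ih =>
    calc v (n + 1) ≤ v n - α4 (v n) + ρ (α4 b) := hdec n
      _ ≤ b := sub_add_le_of_monotoneOn_id_sub hid4.2.1.monotoneOn (hvnn n) ih hρ_le

/-- **Sublevel-set invariance lemma from the proof of the ISS Lyapunov theorem.** -/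
theorem sublevel_invariance
    (α4 ρ : ℝ → ℝ)
    (hα4 : IsClassKInf α4) (hid4 : IsClassK fun t => t - α4 t)
    (hρ : IsClassKInf ρ) (hidρ : IsClassKInf fun t => t - ρ t)
    (b : ℝ) (hb : 0 ≤ b)
    (v : ℕ → ℝ) (hvnn : ∀ k, 0 ≤ v k)
    (hdec : ∀ k, v (k + 1) ≤ v k - α4 (v k) + ρ (α4 b))
    (k0 : ℕ) (hk0 : v k0 ≤ b) :
    ∀ k, k0 ≤ k → v k ≤ b :=
  sublevel_invariance_general α4 ρ hα4 hid4 hidρ b hb v hvnn hdec k0 hk0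
end
end

section
/- (Concrete failure of the terminal-cost decrease condition without constraint back-offs, from the paper's Remark 1 / accompanying example.) Let p_f, q, r, w > 0 be real numbers and suppose q < p_f²/(r + p_f). Then for every real x with 1 < x < 1 + w(r + p_f)/(p_f² − q(r + p_f)) and every real u: p_f(x + u − 1)² − p_f(x − 1)² + q(x − 1)² + r u² + w·max(0, x − 1) > 0. In particular, for the scalar system x⁺ = x + u with target x_s = 1, u_s = 0, stage cost ℓ(x,u) = q(x−1)² + r u² + w·max{0, x−1} (a quadratic tracking cost plus a soft constraint penalty active at the target) and terminal cost V_f(x) = p_f(x−1)², there is no control law u = κ(x) achieving V_f(x + κ(x)) − V_f(x) ≤ −ℓ(x, κ(x)) at all points near the target. -/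
/-- **Failure of the terminal-cost decrease condition without constraint back-offs
(Remark 1 of the paper and its accompanying example).** -/
theorem no_terminal_control_law_without_backoff
    (pf q r w : ℝ) (hpf : 0 < pf) (hq : 0 < q) (hr : 0 < r) (hw : 0 < w)
    (hqlt : q < pf ^ 2 / (r + pf)) :
    (∀ x : ℝ, 1 < x → x < 1 + w * (r + pf) / (pf ^ 2 - q * (r + pf)) →
      ∀ u : ℝ,
        0 < pf * (x + u - 1) ^ 2 - pf * (x - 1) ^ 2 + q * (x - 1) ^ 2 + r * u ^ 2 +
          w * max 0 (x - 1)) ∧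
    ¬ ∃ κ : ℝ → ℝ, ∃ η : ℝ, 0 < η ∧ ∀ x : ℝ, |x - 1| < η →
        pf * (x + κ x - 1) ^ 2 - pf * (x - 1) ^ 2 ≤
          -(q * (x - 1) ^ 2 + r * (κ x) ^ 2 + w * max 0 (x - 1)) := by
  have hs : 0 < r + pf := by linarith
  have hD : 0 < pf ^ 2 - q * (r + pf) := by
    have := (lt_div_iff₀ hs).mp hqlt
    linarith
  have key : ∀ x : ℝ, 1 < x → x < 1 + w * (r + pf) / (pf ^ 2 - q * (r + pf)) →
      ∀ u : ℝ,
        0 < pf * (x + u - 1) ^ 2 - pf * (x - 1) ^ 2 + q * (x - 1) ^ 2 + r * u ^ 2 +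
          w * max 0 (x - 1) := by
    intro x hx1 hx2 u
    have ha : 0 < x - 1 := by linarith
    have hmax : max 0 (x - 1) = x - 1 := max_eq_right ha.le
    rw [hmax]
    have hb : (x - 1) * (pf ^ 2 - q * (r + pf)) < w * (r + pf) := by
      have : x - 1 < w * (r + pf) / (pf ^ 2 - q * (r + pf)) := by linarith
      exact (lt_div_iff₀ hD).mp this
    nlinarith [sq_nonneg ((r + pf) * u + pf * (x - 1)), mul_pos ha hs, sq_nonneg (x - 1)]
  refine ⟨key, ?_⟩
  rintro ⟨κ, η, hη, hκ⟩
  set b := w * (r + pf) / (pf ^ 2 - q * (r + pf)) with hb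
  have hbpos : 0 < b := by positivity
  set a := min (η / 2) (b / 2) with hadef
  have hapos : 0 < a := lt_min (by linarith) (by linarith)
  have h1 : (1 : ℝ) < 1 + a := by linarith
  have h2 : 1 + a < 1 + b := by
    have : a ≤ b / 2 := min_le_right _ _
    linarith
  have h3 : |(1 + a) - 1| < η := by
    have : a ≤ η / 2 := min_le_left _ _
    rw [show (1 + a) - 1 = a by ring, abs_of_pos hapos]
    linarith
  have hpos := key (1 + a) h1 h2 (κ (1 + a))
  have hle := hκ (1 + a) h3
  linarith
end
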